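/- arXiv:2603.28268 — 7 statements merged into one kernel-verified Lean document; each statement's English description precedes it below -/
import Mathlib

section
/- Let G be a graph on vertex set [n], let ρ : [n] → [k] be a coloring, and let E_i be a nonempty finite set of edges of G, each non-monochromatic under ρ (i.e., ρ(u) ≠ ρ(v) for every edge {u,v} ∈ E_i). Let C_i := {p_e : e ∈ E_i} ⊂ ℝ^{n+k}, let d_{i,v} denote the degree of vertex v in the graph with edge set E_i, let Γ_i be the number of ordered pairs of distinct edges e, e' ∈ E_i with ρ(e) ∩ ρ(e') = ∅, and let K_i be the number of ordered pairs of distinct edges e, e' ∈ E_i with |ρ(e) ∩ ρ(e')| = 2. Then the 1-means cost of C_i equals 3|E_i| − 1 + (Γ_i − K_i)/|E_i| − (1/|E_i|)·Σ_v d_{i,v}². -/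
open Finset
open scoped RealInnerProductSpace

/-- The 1-means (single-center) cost of a finite cluster `C ⊆ ℝ^D`:
`min_{c ∈ ℝ^D} ∑_{p ∈ C} ‖p - c‖²` (expressed as an infimum, which is attained). -/
noncomputable def oneMeansCost {D : ℕ} (C : Finset (EuclideanSpace ℝ (Fin D))) : ℝ :=
  ⨅ c : EuclideanSpace ℝ (Fin D), ∑ p ∈ C, ‖p - c‖ ^ 2

/-- The embedded point `p_e := e_u + e_v + e_{n+ρ(u)} + e_{n+ρ(v)} ∈ ℝ^{n+k}` associated to
an edge `e = {u,v}` under the coloring `ρ`. -/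
noncomputable def embedEdge (n k : ℕ) (ρ : Fin n → Fin k) :
    Sym2 (Fin n) → EuclideanSpace ℝ (Fin (n + k)) :=
  Sym2.lift ⟨fun u v =>
      EuclideanSpace.single (Fin.castAdd k u) (1 : ℝ) +
      EuclideanSpace.single (Fin.castAdd k v) (1 : ℝ) +
      EuclideanSpace.single (Fin.natAdd n (ρ u)) (1 : ℝ) +
      EuclideanSpace.single (Fin.natAdd n (ρ v)) (1 : ℝ),
    fun u v => by abel_nf⟩

/-- The color set `ρ(e) := {ρ(u), ρ(v)}` of an edge `e = {u,v}`. -/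
def colorPair {n k : ℕ} (ρ : Fin n → Fin k) : Sym2 (Fin n) → Finset (Fin k) :=
  Sym2.lift ⟨fun u v => {ρ u, ρ v}, fun u v => Finset.pair_comm (ρ u) (ρ v)⟩

/-! ### Auxiliary lemmas -/

section Aux

/-- The 1-means cost equals `∑ ‖p‖² - ‖∑ p‖² / |C|` for nonempty `C`. -/
lemma oneMeansCost_eq {D : ℕ} (C : Finset (EuclideanSpace ℝ (Fin D))) (h : C.Nonempty) :
    oneMeansCost C = (∑ p ∈ C, ‖p‖ ^ 2) - ‖∑ p ∈ C, p‖ ^ 2 / C.card := by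
  classical
  have hm0 : (0:ℝ) < (C.card : ℝ) := by exact_mod_cast Finset.card_pos.mpr h
  set m : ℝ := (C.card : ℝ) with hmdef
  set s : EuclideanSpace ℝ (Fin D) := ∑ p ∈ C, p with hs
  set A : ℝ := (∑ p ∈ C, ‖p‖ ^ 2) - ‖s‖ ^ 2 / m with hA
  have key : ∀ c : EuclideanSpace ℝ (Fin D),
      ∑ p ∈ C, ‖p - c‖ ^ 2 = A + ‖m • c - s‖ ^ 2 / m := by
    intro c
    have h1 : ∑ p ∈ C, ‖p - c‖ ^ 2
        = (∑ p ∈ C, ‖p‖ ^ 2) - 2 * ⟪s, c⟫ + m * ‖c‖ ^ 2 := by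
      have : ∀ p ∈ C, ‖p - c‖ ^ 2 = ‖p‖ ^ 2 - 2 * ⟪p, c⟫ + ‖c‖ ^ 2 :=
        fun p _ => norm_sub_sq_real p c
      rw [Finset.sum_congr rfl this]
      rw [Finset.sum_add_distrib, Finset.sum_sub_distrib, ← Finset.mul_sum,
        ← sum_inner, Finset.sum_const, nsmul_eq_mul]
    have h2 : ‖m • c - s‖ ^ 2 = m ^ 2 * ‖c‖ ^ 2 - 2 * (m * ⟪c, s⟫) + ‖s‖ ^ 2 := by
      rw [norm_sub_sq_real, real_inner_smul_left, norm_smul]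
      rw [Real.norm_eq_abs, abs_of_pos hm0]
      ring
    rw [h1, h2, hA, real_inner_comm s c]
    field_simp
    ring
  have hge : ∀ c : EuclideanSpace ℝ (Fin D), A ≤ ∑ p ∈ C, ‖p - c‖ ^ 2 := by
    intro c
    rw [key c]
    have : (0:ℝ) ≤ ‖m • c - s‖ ^ 2 / m := by positivity
    linarith
  refine le_antisymm ?_ (le_ciInf hge)
  have hle : (∑ p ∈ C, ‖p - m⁻¹ • s‖ ^ 2) = A := by
    rw [key, smul_smul, mul_inv_cancel₀ (ne_of_gt hm0), one_smul, sub_self]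
    simp
  calc oneMeansCost C ≤ ∑ p ∈ C, ‖p - m⁻¹ • s‖ ^ 2 :=
        ciInf_le ⟨A, by rintro _ ⟨c, rfl⟩; exact hge c⟩ _
    _ = A := hle

variable {n k : ℕ}

lemma castAdd_eq_iff (u v : Fin n) : Fin.castAdd k u = Fin.castAdd k v ↔ u = v :=
  (Fin.castAdd_injective n k).eq_iff

lemma natAdd_eq_iff (a b : Fin k) : Fin.natAdd n a = Fin.natAdd n b ↔ a = b := by
  constructor
  · intro h
    have := congrArg Fin.val h
    simp [Fin.ext_iff] at this ⊢
    omega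
  · rintro rfl; rfl

lemma castAdd_ne_natAdd (u : Fin n) (a : Fin k) : Fin.castAdd k u ≠ Fin.natAdd n a := by
  have := u.isLt
  simp [Fin.ext_iff]
  omega

lemma natAdd_ne_castAdd (a : Fin k) (u : Fin n) : Fin.natAdd n a ≠ Fin.castAdd k u :=
  (castAdd_ne_natAdd u a).symm

lemma inner_single_one {D : ℕ} (i j : Fin D) :
    ⟪EuclideanSpace.single i (1:ℝ), EuclideanSpace.single j (1:ℝ)⟫
      = if i = j then 1 else 0 := by
  rw [EuclideanSpace.inner_single_left]
  simp [EuclideanSpace.single_apply, eq_comm]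

lemma embedEdge_mk (ρ : Fin n → Fin k) (u v : Fin n) :
    embedEdge n k ρ s(u, v) =
      EuclideanSpace.single (Fin.castAdd k u) (1 : ℝ) +
      EuclideanSpace.single (Fin.castAdd k v) (1 : ℝ) +
      EuclideanSpace.single (Fin.natAdd n (ρ u)) (1 : ℝ) +
      EuclideanSpace.single (Fin.natAdd n (ρ v)) (1 : ℝ) := by
  rw [embedEdge, Sym2.lift_mk]

lemma colorPair_mk (ρ : Fin n → Fin k) (u v : Fin n) :
    colorPair ρ s(u, v) = {ρ u, ρ v} := by
  rw [colorPair, Sym2.lift_mk]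

lemma inner_embed (ρ : Fin n → Fin k) (u v u' v' : Fin n) :
    ⟪embedEdge n k ρ s(u,v), embedEdge n k ρ s(u',v')⟫ =
      ((if u = u' then (1:ℝ) else 0) + (if u = v' then 1 else 0) +
       (if v = u' then 1 else 0) + (if v = v' then 1 else 0)) +
      ((if ρ u = ρ u' then (1:ℝ) else 0) + (if ρ u = ρ v' then 1 else 0) +
       (if ρ v = ρ u' then 1 else 0) + (if ρ v = ρ v' then 1 else 0)) := by
  rw [embedEdge_mk, embedEdge_mk]
  simp only [inner_add_left, inner_add_right, inner_single_one,
    castAdd_eq_iff, natAdd_eq_iff, castAdd_ne_natAdd, natAdd_ne_castAdd, if_false,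
    if_neg (castAdd_ne_natAdd _ _), if_neg (natAdd_ne_castAdd _ _)]
  ring

lemma sum_ind_ind {α : Type*} [Fintype α] [DecidableEq α] (a b : α) :
    ∑ w : α, (if w = a then (1:ℝ) else 0) * (if w = b then 1 else 0)
      = if a = b then 1 else 0 := by
  rw [Finset.sum_eq_single a]
  · simp
  · intro w _ hw; simp [hw]
  · intro h; exact absurd (Finset.mem_univ a) h

lemma sum_mem_ind {u v u' v' : Fin n} (huv : u ≠ v) (huv' : u' ≠ v') :
    ∑ w : Fin n, (if w ∈ s(u,v) then (1:ℝ) else 0) * (if w ∈ s(u',v') then 1 else 0) =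
      (if u = u' then (1:ℝ) else 0) + (if u = v' then 1 else 0) +
      (if v = u' then 1 else 0) + (if v = v' then 1 else 0) := by
  have h1 : ∀ (a b : Fin n), a ≠ b → ∀ w : Fin n,
      (if w ∈ s(a,b) then (1:ℝ) else 0)
        = (if w = a then (1:ℝ) else 0) + (if w = b then 1 else 0) := by
    intro a b hab w
    by_cases h : w = a
    · subst h
      simp [Sym2.mem_iff, hab]
    · by_cases h' : w = b
      · subst h'
        simp [Sym2.mem_iff, h]
      · simp [Sym2.mem_iff, h, h']
  simp only [h1 u v huv, h1 u' v' huv']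
  simp only [add_mul, mul_add, Finset.sum_add_distrib, sum_ind_ind]
  ring

lemma pair_inter_card {α : Type*} [DecidableEq α] {a b c d : α} (hab : a ≠ b) (hcd : c ≠ d) :
    ((({a,b} : Finset α) ∩ {c,d}).card : ℝ) =
      (if a = c then (1:ℝ) else 0) + (if a = d then 1 else 0) +
      (if b = c then 1 else 0) + (if b = d then 1 else 0) := by
  have key : ({a,b} : Finset α) ∩ {c,d} = ({a,b} : Finset α).filter (fun x => x ∈ ({c,d} : Finset α)) := by
    ext x; simp [Finset.mem_filter, Finset.mem_inter]
  rw [key, ← Finset.sum_boole]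
  push_cast
  rw [Finset.sum_pair hab]
  have hmem : ∀ x : α, (if x ∈ ({c,d} : Finset α) then (1:ℝ) else 0)
      = (if x = c then (1:ℝ) else 0) + (if x = d then 1 else 0) := by
    intro x
    by_cases h : x = c
    · subst h; simp [hcd]
    · by_cases h' : x = d
      · subst h'; simp [h]
      · simp [h, h']
  rw [hmem a, hmem b]
  ring

lemma norm_embed {ρ : Fin n → Fin k} {u v : Fin n} (h : ρ u ≠ ρ v) :
    ‖embedEdge n k ρ s(u,v)‖ ^ 2 = 4 := by
  have huv : u ≠ v := ne_of_apply_ne ρ h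
  rw [← real_inner_self_eq_norm_sq, inner_embed]
  simp [huv, huv.symm, h, h.symm]
  norm_num

lemma inner_embed' (ρ : Fin n → Fin k) {u v u' v' : Fin n}
    (h1 : ρ u ≠ ρ v) (h2 : ρ u' ≠ ρ v') :
    ⟪embedEdge n k ρ s(u,v), embedEdge n k ρ s(u',v')⟫ =
      (∑ w : Fin n, (if w ∈ s(u,v) then (1:ℝ) else 0) * (if w ∈ s(u',v') then 1 else 0)) +
      ((colorPair ρ s(u,v) ∩ colorPair ρ s(u',v')).card : ℝ) := by
  rw [inner_embed, sum_mem_ind (ne_of_apply_ne ρ h1) (ne_of_apply_ne ρ h2),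
    colorPair_mk, colorPair_mk, pair_inter_card h1 h2]

lemma embed_apply_castAdd (ρ : Fin n → Fin k) (u v w : Fin n) :
    embedEdge n k ρ s(u,v) (Fin.castAdd k w) =
      (if w = u then (1:ℝ) else 0) + (if w = v then 1 else 0) := by
  rw [embedEdge_mk]
  simp [PiLp.add_apply, EuclideanSpace.single_apply, castAdd_eq_iff, castAdd_ne_natAdd]

lemma embed_injOn (ρ : Fin n → Fin k) {e e' : Sym2 (Fin n)}
    (he : ¬ e.IsDiag) (he' : ¬ e'.IsDiag)
    (h : embedEdge n k ρ e = embedEdge n k ρ e') : e = e' := by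
  induction e using Sym2.ind with | _ u v =>
  induction e' using Sym2.ind with | _ u' v' =>
  rw [Sym2.mk_isDiag_iff] at he he'
  have key : ∀ w : Fin n,
      ((if w = u then (1:ℝ) else 0) + (if w = v then 1 else 0)) =
      ((if w = u' then (1:ℝ) else 0) + (if w = v' then 1 else 0)) := by
    intro w
    have h2 : embedEdge n k ρ s(u,v) (Fin.castAdd k w)
        = embedEdge n k ρ s(u',v') (Fin.castAdd k w) := by rw [h]
    rwa [embed_apply_castAdd, embed_apply_castAdd] at h2
  have hu : u = u' ∨ u = v' := by
    by_contra hc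
    push_neg at hc
    have := key u
    simp [he, hc.1, hc.2] at this
  have hv : v = u' ∨ v = v' := by
    by_contra hc
    push_neg at hc
    have := key v
    simp [Ne.symm he, hc.1, hc.2] at this
  rcases hu with h1 | h1 <;> rcases hv with h2 | h2
  · exact absurd (h1.trans h2.symm) he
  · rw [h1, h2]
  · rw [h1, h2, Sym2.eq_swap]
  · exact absurd (h1.trans h2.symm) he

lemma colorPair_card {ρ : Fin n → Fin k} {e : Sym2 (Fin n)}
    (h : ¬ (Sym2.map ρ e).IsDiag) : (colorPair ρ e).card = 2 := by
  induction e using Sym2.ind with | _ u v =>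
  rw [Sym2.map_pair_eq, Sym2.mk_isDiag_iff] at h
  rw [colorPair_mk]
  exact Finset.card_pair h

lemma colorPair_card_le (ρ : Fin n → Fin k) (e : Sym2 (Fin n)) :
    (colorPair ρ e).card ≤ 2 := by
  induction e using Sym2.ind with | _ u v =>
  rw [colorPair_mk]
  exact (Finset.card_insert_le _ _).trans (by simp)

end Aux

open Classical in
/-- cost of a single cluster of embedded edges. -/
theorem stmt1 (n k : ℕ) (G : SimpleGraph (Fin n)) [DecidableRel G.Adj]
    (ρ : Fin n → Fin k)
    (Ei : Finset (Sym2 (Fin n))) (hEiG : Ei ⊆ G.edgeFinset) (hne : Ei.Nonempty)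
    (hnm : ∀ e ∈ Ei, ¬ (Sym2.map ρ e).IsDiag) :
    oneMeansCost (Ei.image (embedEdge n k ρ)) =
      3 * (Ei.card : ℝ) - 1 +
        (((Ei.offDiag.filter
              (fun p => colorPair ρ p.1 ∩ colorPair ρ p.2 = ∅)).card : ℝ) -
          ((Ei.offDiag.filter
              (fun p => (colorPair ρ p.1 ∩ colorPair ρ p.2).card = 2)).card : ℝ)) /
          (Ei.card : ℝ) -
        (1 / (Ei.card : ℝ)) *
          ∑ v : Fin n, ((Ei.filter (fun e => v ∈ e)).card : ℝ) ^ 2 := by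
  classical
  have hm0 : (0:ℝ) < (Ei.card : ℝ) := by exact_mod_cast Finset.card_pos.mpr hne
  have hnd : ∀ e ∈ Ei, ¬ e.IsDiag := by
    intro e he hd
    apply hnm e he
    induction e using Sym2.ind with | _ u v =>
    rw [Sym2.mk_isDiag_iff] at hd
    rw [Sym2.map_pair_eq, Sym2.mk_isDiag_iff, hd]
  -- rewrite the cost
  rw [oneMeansCost_eq _ (hne.image _)]
  rw [Finset.sum_image (fun e he e' he' h => embed_injOn ρ (hnd e he) (hnd e' he') h),
    Finset.sum_image (fun e he e' he' h => embed_injOn ρ (hnd e he) (hnd e' he') h),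
    Finset.card_image_of_injOn (fun e he e' he' h => embed_injOn ρ (hnd e he) (hnd e' he') h)]
  -- ∑ of squared norms
  have hS1 : ∑ e ∈ Ei, ‖embedEdge n k ρ e‖ ^ 2 = 4 * (Ei.card : ℝ) := by
    have : ∀ e ∈ Ei, ‖embedEdge n k ρ e‖ ^ 2 = 4 := by
      intro e he
      have h1 := hnm e he
      induction e using Sym2.ind with | _ u v =>
      rw [Sym2.map_pair_eq, Sym2.mk_isDiag_iff] at h1
      exact norm_embed h1
    rw [Finset.sum_congr rfl this, Finset.sum_const, nsmul_eq_mul]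
    ring
  -- inner products of embedded edges
  have hinner : ∀ e ∈ Ei, ∀ e' ∈ Ei,
      ⟪embedEdge n k ρ e, embedEdge n k ρ e'⟫ =
        (∑ w : Fin n, (if w ∈ e then (1:ℝ) else 0) * (if w ∈ e' then 1 else 0)) +
        ((colorPair ρ e ∩ colorPair ρ e').card : ℝ) := by
    intro e he e' he'
    have h1 := hnm e he
    have h2 := hnm e' he'
    clear he he'
    induction e using Sym2.ind with | _ u v =>
    induction e' using Sym2.ind with | _ u' v' =>
    rw [Sym2.map_pair_eq, Sym2.mk_isDiag_iff] at h1 h2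
    exact inner_embed' ρ h1 h2
  -- squared norm of the sum
  have hS2 : ‖∑ e ∈ Ei, embedEdge n k ρ e‖ ^ 2 =
      (∑ v : Fin n, ((Ei.filter (fun e => v ∈ e)).card : ℝ) ^ 2)
      + ∑ p ∈ Ei ×ˢ Ei, ((colorPair ρ p.1 ∩ colorPair ρ p.2).card : ℝ) := by
    rw [← real_inner_self_eq_norm_sq, sum_inner]
    have step1 : ∀ e ∈ Ei, ⟪embedEdge n k ρ e, ∑ e' ∈ Ei, embedEdge n k ρ e'⟫
        = ∑ e' ∈ Ei, ((∑ w : Fin n, (if w ∈ e then (1:ℝ) else 0) * (if w ∈ e' then 1 else 0)) +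
          ((colorPair ρ e ∩ colorPair ρ e').card : ℝ)) := by
      intro e he
      rw [inner_sum]
      exact Finset.sum_congr rfl fun e' he' => hinner e he e' he'
    rw [Finset.sum_congr rfl step1]
    rw [Finset.sum_congr rfl (fun e _ => Finset.sum_add_distrib), Finset.sum_add_distrib]
    congr 1
    · -- vertex part
      have : ∑ v : Fin n, ((Ei.filter (fun e => v ∈ e)).card : ℝ) ^ 2
          = ∑ w : Fin n, ∑ e ∈ Ei, ∑ e' ∈ Ei,
              (if w ∈ e then (1:ℝ) else 0) * (if w ∈ e' then 1 else 0) := by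
        refine Finset.sum_congr rfl fun w _ => ?_
        have hb : ((Ei.filter (fun e => w ∈ e)).card : ℝ)
            = ∑ e ∈ Ei, (if w ∈ e then (1:ℝ) else 0) := (Finset.sum_boole _ _).symm
        rw [sq, hb, Finset.sum_mul_sum]
      rw [this]
      have c1 : ∀ e : Sym2 (Fin n),
          (∑ e' ∈ Ei, ∑ w : Fin n, (if w ∈ e then (1:ℝ) else 0) * (if w ∈ e' then 1 else 0))
            = ∑ w : Fin n, ∑ e' ∈ Ei,
                (if w ∈ e then (1:ℝ) else 0) * (if w ∈ e' then 1 else 0) :=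
        fun e => Finset.sum_comm
      rw [Finset.sum_congr rfl (fun e _ => c1 e)]
      exact Finset.sum_comm
    · exact (Finset.sum_product' _ _ _).symm
  -- split the product sum into diagonal and off-diagonal
  have hsplit : ∑ p ∈ Ei ×ˢ Ei, ((colorPair ρ p.1 ∩ colorPair ρ p.2).card : ℝ)
      = 2 * (Ei.card : ℝ)
        + (((Ei.offDiag.card : ℝ)
          + ((Ei.offDiag.filter
              (fun p => (colorPair ρ p.1 ∩ colorPair ρ p.2).card = 2)).card : ℝ)
          - ((Ei.offDiag.filter
              (fun p => colorPair ρ p.1 ∩ colorPair ρ p.2 = ∅)).card : ℝ))) := by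
    rw [← Finset.diag_union_offDiag Ei,
      Finset.sum_union (Finset.disjoint_diag_offDiag _)]
    congr 1
    · rw [Finset.sum_diag]
      have : ∀ e ∈ Ei, ((colorPair ρ e ∩ colorPair ρ e).card : ℝ) = 2 := by
        intro e he
        rw [Finset.inter_self]
        exact_mod_cast congrArg Nat.cast (colorPair_card (hnm e he))
      rw [Finset.sum_congr rfl this, Finset.sum_const, nsmul_eq_mul]
      ring
    · have hoff : ∀ p ∈ Ei.offDiag, ((colorPair ρ p.1 ∩ colorPair ρ p.2).card : ℝ)
          = 1 + (if (colorPair ρ p.1 ∩ colorPair ρ p.2).card = 2 then (1:ℝ) else 0)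
            - (if colorPair ρ p.1 ∩ colorPair ρ p.2 = ∅ then (1:ℝ) else 0) := by
        intro p _
        have h2 : (colorPair ρ p.1 ∩ colorPair ρ p.2).card ≤ 2 :=
          le_trans (Finset.card_le_card Finset.inter_subset_left) (colorPair_card_le ρ p.1)
        set t := colorPair ρ p.1 ∩ colorPair ρ p.2 with ht
        have hcases : t.card = 0 ∨ t.card = 1 ∨ t.card = 2 := by omega
        rcases hcases with hc | hc | hc
        · have : t = ∅ := Finset.card_eq_zero.mp hc
          rw [hc, this]
          norm_num
        · have hne' : t ≠ ∅ := by
            intro hh; rw [hh] at hc; simp at hc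
          rw [hc]
          simp [hne']
        · have hne' : t ≠ ∅ := by
            intro hh; rw [hh] at hc; simp at hc
          rw [hc]
          norm_num [hne']
      rw [Finset.sum_congr rfl hoff]
      rw [Finset.sum_sub_distrib, Finset.sum_add_distrib, Finset.sum_const, nsmul_eq_mul,
        Finset.sum_boole, Finset.sum_boole]
      ring
  -- cardinality of offDiag
  have hoffcard : (Ei.offDiag.card : ℝ) = (Ei.card : ℝ) * (Ei.card : ℝ) - (Ei.card : ℝ) := by
    rw [Finset.offDiag_card]
    have hle : Ei.card ≤ Ei.card * Ei.card := Nat.le_mul_of_pos_left _ (Finset.card_pos.mpr hne)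
    push_cast [Nat.cast_sub hle]
    ring
  rw [hS1, hS2, hsplit, hoffcard]
  field_simp
  ring
end

section
/- Let 0 < η < 1/1000 and let E_i be a finite set of N edges, each assigned a set ρ(e) of exactly 2 colors from [k], with N ≥ η^{-3}. Let γ_i := Γ_i/(N(N−1)) where Γ_i is the number of ordered pairs of distinct edges e, e' ∈ E_i with ρ(e) ∩ ρ(e') = ∅, and let κ_i := K_i/(N(N−1)) where K_i is the number of ordered pairs of distinct edges with |ρ(e) ∩ ρ(e')| = 2 (equivalently ρ(e) = ρ(e')). If κ_i ≤ η³ and γ_i ≤ η/3, then there exists a color c ∈ [k] such that at least (1−η)·N of the edges e ∈ E_i satisfy c ∈ ρ(e). -/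
open Finset

lemma card_filter_product_eq {α β : Type*} [DecidableEq α] (s : Finset α) (t : Finset β)
    (P : α × β → Prop) [DecidablePred P] :
    ((s ×ˢ t).filter P).card = ∑ a ∈ s, (t.filter (fun b => P (a, b))).card := by
  rw [Finset.card_eq_sum_card_fiberwise (f := Prod.fst) (t := s)
    (fun p hp => (mem_product.1 (mem_filter.1 hp).1).1)]
  refine sum_congr rfl fun a ha => ?_
  refine card_bij (fun p _ => p.2) ?_ ?_ ?_
  · rintro ⟨p1, p2⟩ hp
    simp only [mem_filter, mem_product] at hp ⊢
    obtain ⟨⟨⟨h1, h2⟩, hP⟩, heq⟩ := hp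
    subst heq
    exact ⟨h2, hP⟩
  · rintro ⟨p1, p2⟩ h1 ⟨q1, q2⟩ h2 h
    simp only [mem_filter] at h1 h2
    simp_all
  · intro b hb
    simp only [mem_filter, mem_product] at hb ⊢
    exact ⟨(a, b), ⟨⟨⟨ha, hb.1⟩, hb.2⟩, rfl⟩, rfl⟩

lemma pair_struct {γ : Type*} [DecidableEq γ] {s : Finset γ} (h : s.card = 2) {b : γ}
    (hb : b ∈ s) : ∃ x, x ≠ b ∧ s = {b, x} := by
  obtain ⟨u, v, huv, rfl⟩ := Finset.card_eq_two.1 h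
  rcases mem_insert.1 hb with rfl | hbv
  · exact ⟨v, fun h => huv h.symm, rfl⟩
  · rcases mem_singleton.1 hbv with rfl
    exact ⟨u, huv, pair_comm u b⟩

lemma sq_le_imp {x y : ℝ} (hx : 0 ≤ x) (hy : 0 ≤ y) (h : x ^ 2 ≤ y ^ 2) : x ≤ y := by nlinarith

set_option maxHeartbeats 1000000 in
/-- if a cluster of `N ≥ η⁻³` edges (each carrying a set of exactly two colors
from `[k]`) has fraction `κ_i ≤ η³` of ordered pairs of distinct edges sharing two colors and
fraction `γ_i ≤ η/3` of ordered pairs sharing no color, then some color is carried by at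
least a `(1-η)` fraction of the edges. -/
theorem stmt2 {ι : Type*} [DecidableEq ι] (k : ℕ) (η : ℝ) (hη0 : 0 < η) (hη1 : η < 1 / 1000)
    (E : Finset ι) (ρ : ι → Finset (Fin k))
    (h2 : ∀ e ∈ E, (ρ e).card = 2)
    (hN : 1 / η ^ 3 ≤ (E.card : ℝ))
    (hκ : ((E.offDiag.filter (fun p => (ρ p.1 ∩ ρ p.2).card = 2)).card : ℝ) /
          ((E.card : ℝ) * ((E.card : ℝ) - 1)) ≤ η ^ 3)
    (hγ : ((E.offDiag.filter (fun p => ρ p.1 ∩ ρ p.2 = ∅)).card : ℝ) /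
          ((E.card : ℝ) * ((E.card : ℝ) - 1)) ≤ η / 3) :
    ∃ c : Fin k, (1 - η) * (E.card : ℝ) ≤ ((E.filter (fun e => c ∈ ρ e)).card : ℝ) := by
  classical
  have hη3 : (0:ℝ) < η ^ 3 := by positivity
  have hηn : (1:ℝ) ≤ η ^ 3 * (E.card : ℝ) := by
    rw [div_le_iff₀ hη3] at hN; linarith
  have hncube : (10:ℝ) ^ 9 ≤ (E.card : ℝ) := by
    have h1 : η ^ 3 ≤ (1/1000 : ℝ) ^ 3 := by
      apply pow_le_pow_left₀ hη0.le hη1.le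
    have h2 : (10:ℝ) ^ 9 ≤ 1 / η ^ 3 := by
      rw [le_div_iff₀ hη3]; nlinarith
    linarith
  have hn0 : (0:ℝ) < (E.card : ℝ) := by linarith
  have hnn : (0:ℝ) < (E.card : ℝ) * ((E.card : ℝ) - 1) := by nlinarith
  have hE2 : 2 ≤ E.card := by exact_mod_cast (show ((2:ℕ):ℝ) ≤ (E.card : ℝ) by push_cast; linarith)
  have hEne : E.Nonempty := Finset.card_pos.1 (by omega)
  set Γs := E.offDiag.filter (fun p => ρ p.1 ∩ ρ p.2 = ∅) with hΓs
  set Ks := E.offDiag.filter (fun p => (ρ p.1 ∩ ρ p.2).card = 2) with hKs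
  have hΓ : (Γs.card : ℝ) ≤ η / 3 * ((E.card : ℝ) * ((E.card : ℝ) - 1)) := by
    rw [div_le_iff₀ hnn] at hγ; linarith
  have hK : (Ks.card : ℝ) ≤ η ^ 3 * ((E.card : ℝ) * ((E.card : ℝ) - 1)) := by
    rw [div_le_iff₀ hnn] at hκ; linarith
  -- any set of edges whose pairwise color-set intersections have two colors is small
  have key2 : ∀ s : Finset ι, s ⊆ E → (∀ p ∈ s.offDiag, (ρ p.1 ∩ ρ p.2).card = 2) →
      (s.card : ℝ) ≤ η * (E.card : ℝ) / 20 := by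
    intro s hsE hs2
    have hsub : s.offDiag ⊆ Ks := by
      intro p hp
      rw [hKs, mem_filter]
      refine ⟨?_, hs2 p hp⟩
      rw [mem_offDiag] at hp ⊢
      exact ⟨hsE hp.1, hsE hp.2.1, hp.2.2⟩
    have hcard : s.offDiag.card ≤ Ks.card := card_le_card hsub
    rw [offDiag_card] at hcard
    have hmn : (s.card : ℝ) ≤ (E.card : ℝ) := Nat.cast_le.2 (card_le_card hsE)
    have hm0 : (0:ℝ) ≤ (s.card : ℝ) := Nat.cast_nonneg _
    have h1 : s.card ≤ s.card * s.card := by nlinarith [Nat.zero_le s.card]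
    have hcr : (s.card : ℝ) * (s.card : ℝ) - (s.card : ℝ) ≤ (Ks.card : ℝ) := by
      have h2' : ((s.card * s.card - s.card : ℕ) : ℝ) ≤ (Ks.card : ℝ) := Nat.cast_le.2 hcard
      rwa [Nat.cast_sub h1, Nat.cast_mul] at h2'
    have hstep1 : (s.card : ℝ) * (s.card : ℝ) ≤ 2 * (η ^ 3 * (E.card : ℝ) ^ 2) := by
      nlinarith [mul_nonneg hη3.le hn0.le, mul_le_mul_of_nonneg_right hηn hn0.le]
    have hstep2 : (s.card : ℝ) ^ 2 ≤ (η * (E.card : ℝ) / 20) ^ 2 := by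
      nlinarith [mul_nonneg (mul_nonneg (show (0:ℝ) ≤ 1/400 - 2*η by linarith)
        (mul_nonneg hη0.le hη0.le)) (mul_nonneg hn0.le hn0.le)]
    exact sq_le_imp hm0 (by positivity) hstep2
  -- edges containing two given distinct colors have exactly that pair
  have hfull : ∀ e ∈ E, ∀ c d : Fin k, c ≠ d → c ∈ ρ e → d ∈ ρ e → ρ e = {c, d} := by
    intro e he c d hcd hc hd
    refine (Finset.eq_of_subset_of_card_le ?_ ?_).symm
    · intro y hy
      rcases mem_insert.1 hy with rfl | hy
      · exact hc
      · rw [mem_singleton] at hy; subst hy; exact hd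
    · rw [h2 e he, card_pair hcd]
  -- averaging: some edge has few disjoint partners
  set D : ι → Finset ι := fun e => E.filter (fun e' => e ≠ e' ∧ ρ e ∩ ρ e' = ∅) with hD
  have hsum : ∑ e ∈ E, (D e).card = Γs.card := by
    have h1 : Γs = (E ×ˢ E).filter (fun p => p.1 ≠ p.2 ∧ ρ p.1 ∩ ρ p.2 = ∅) := by
      ext p
      simp only [hΓs, mem_filter, mem_offDiag, mem_product]
      tauto
    rw [h1, card_filter_product_eq]
  obtain ⟨e₀, he₀, hD₀⟩ : ∃ e₀ ∈ E, E.card * (D e₀).card ≤ Γs.card := by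
    by_contra hc
    push_neg at hc
    have h1 : ∑ e ∈ E, Γs.card < ∑ e ∈ E, E.card * (D e).card :=
      sum_lt_sum_of_nonempty hEne (fun e he => hc e he)
    rw [← Finset.mul_sum, hsum, sum_const, smul_eq_mul] at h1
    exact lt_irrefl _ h1
  obtain ⟨a₀, b₀, hab₀, hρ₀⟩ := Finset.card_eq_two.1 (h2 e₀ he₀)
  have key : ∀ a b : Fin k, a ≠ b → ρ e₀ = {a, b} →
      (E.filter (fun e => b ∈ ρ e)).card ≤ (E.filter (fun e => a ∈ ρ e)).card →
      (1 - η) * (E.card : ℝ) ≤ ((E.filter (fun e => a ∈ ρ e)).card : ℝ) := by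
    intro a b hab hρab hBA
    set A := E.filter (fun e => a ∈ ρ e) with hA
    set B := E.filter (fun e => b ∈ ρ e) with hB
    have he₀A : e₀ ∈ A := mem_filter.2 ⟨he₀, by rw [hρab]; exact mem_insert_self a {b}⟩
    -- edges outside A ∪ B are disjoint partners of e₀
    have hdsub : E \ (A ∪ B) ⊆ D e₀ := by
      intro e he
      rw [mem_sdiff, mem_union] at he
      obtain ⟨heE, hnab⟩ := he
      have hna : a ∉ ρ e := fun h => hnab (Or.inl (mem_filter.2 ⟨heE, h⟩))
      have hnb : b ∉ ρ e := fun h => hnab (Or.inr (mem_filter.2 ⟨heE, h⟩))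
      refine mem_filter.2 ⟨heE, ?_, ?_⟩
      · rintro rfl; exact hnab (Or.inl he₀A)
      · rw [hρab, Finset.eq_empty_iff_forall_notMem]
        intro c hcm
        rw [mem_inter, mem_insert, mem_singleton] at hcm
        rcases hcm.1 with rfl | rfl
        · exact hna hcm.2
        · exact hnb hcm.2
    -- A ∩ B is small
    have hmAB : ((A ∩ B).card : ℝ) ≤ η * (E.card : ℝ) / 20 := by
      apply key2 _ (fun e he => (mem_filter.1 (mem_inter.1 he).1).1)
      intro p hp
      rw [mem_offDiag] at hp
      obtain ⟨hp1, hp2, hne'⟩ := hp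
      have hρ1 : ρ p.1 = {a, b} :=
        hfull p.1 (mem_filter.1 (mem_inter.1 hp1).1).1 a b hab
          (mem_filter.1 (mem_inter.1 hp1).1).2 (mem_filter.1 (mem_inter.1 hp1).2).2
      have hρ2 : ρ p.2 = {a, b} :=
        hfull p.2 (mem_filter.1 (mem_inter.1 hp2).1).1 a b hab
          (mem_filter.1 (mem_inter.1 hp2).1).2 (mem_filter.1 (mem_inter.1 hp2).2).2
      rw [hρ1, hρ2, Finset.inter_self]
      exact card_pair hab
    -- fiber lower bound
    have hfiber : ∀ e ∈ B \ A,
        (A.card : ℝ) - η * (E.card : ℝ) / 10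
          ≤ ((A.filter (fun e' => ρ e ∩ ρ e' = ∅)).card : ℝ) := by
      intro e he
      rw [mem_sdiff] at he
      obtain ⟨heB, heA⟩ := he
      have heE : e ∈ E := (mem_filter.1 heB).1
      have hbe : b ∈ ρ e := (mem_filter.1 heB).2
      have hnae : a ∉ ρ e := fun h => heA (mem_filter.2 ⟨heE, h⟩)
      obtain ⟨x, hxb, hρe⟩ := pair_struct (h2 e heE) hbe
      have hxa : x ≠ a := by
        rintro rfl
        exact hnae (by rw [hρe]; exact mem_insert_of_mem (mem_singleton_self x))
      set T := E.filter (fun f => ρ f = {a, x}) with hT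
      have hTsmall : (T.card : ℝ) ≤ η * (E.card : ℝ) / 20 := by
        apply key2 _ (filter_subset _ _)
        intro p hp
        rw [mem_offDiag] at hp
        rw [(mem_filter.1 hp.1).2, (mem_filter.1 hp.2.1).2, Finset.inter_self]
        exact card_pair (Ne.symm hxa)
      have hsub2 : A.filter (fun e' => ¬(ρ e ∩ ρ e' = ∅)) ⊆ (A ∩ B) ∪ T := by
        intro e' he'
        rw [mem_filter] at he'
        obtain ⟨he'A, hne⟩ := he'
        obtain ⟨c, hc⟩ := Finset.nonempty_iff_ne_empty.2 hne
        rw [mem_inter] at hc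
        have hc1 := hc.1
        rw [hρe, mem_insert, mem_singleton] at hc1
        have he'E : e' ∈ E := (mem_filter.1 he'A).1
        have hae' : a ∈ ρ e' := (mem_filter.1 he'A).2
        rcases hc1 with rfl | rfl
        · exact mem_union_left _ (mem_inter.2 ⟨he'A, mem_filter.2 ⟨he'E, hc.2⟩⟩)
        · exact mem_union_right _
            (mem_filter.2 ⟨he'E, hfull e' he'E a c (Ne.symm hxa) hae' hc.2⟩)
      have h1 : A.card = (A.filter (fun e' => ρ e ∩ ρ e' = ∅)).card
          + (A.filter (fun e' => ¬(ρ e ∩ ρ e' = ∅))).card :=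
        (card_filter_add_card_filter_not _).symm
      have h2' : (A.filter (fun e' => ¬(ρ e ∩ ρ e' = ∅))).card ≤ (A ∩ B).card + T.card :=
        le_trans (card_le_card hsub2) (card_union_le _ _)
      have h3 : (A.card : ℝ) ≤ ((A.filter (fun e' => ρ e ∩ ρ e' = ∅)).card : ℝ)
          + (((A ∩ B).card : ℝ) + (T.card : ℝ)) := by
        have h4 : ((A.filter (fun e' => ¬(ρ e ∩ ρ e' = ∅))).card : ℝ)
            ≤ ((A ∩ B).card : ℝ) + (T.card : ℝ) := by exact_mod_cast h2'
        have h5 : (A.card : ℝ) = ((A.filter (fun e' => ρ e ∩ ρ e' = ∅)).card : ℝ)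
            + ((A.filter (fun e' => ¬(ρ e ∩ ρ e' = ∅))).card : ℝ) := by exact_mod_cast h1
        linarith
      linarith
    -- lower bound on disjoint pairs
    set F := ((B \ A) ×ˢ A).filter (fun p => ρ p.1 ∩ ρ p.2 = ∅) with hF
    have hFcard : ((B \ A).card : ℝ) * ((A.card : ℝ) - η * (E.card : ℝ) / 10)
        ≤ (F.card : ℝ) := by
      rw [hF, card_filter_product_eq]
      push_cast
      calc ((B \ A).card : ℝ) * ((A.card : ℝ) - η * (E.card : ℝ) / 10)
          = ∑ _e ∈ B \ A, ((A.card : ℝ) - η * (E.card : ℝ) / 10) := by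
            rw [sum_const, nsmul_eq_mul]
        _ ≤ ∑ e ∈ B \ A, ((A.filter (fun e' => ρ e ∩ ρ e' = ∅)).card : ℝ) :=
            sum_le_sum hfiber
    have hFΓ : 2 * F.card ≤ Γs.card := by
      have hdisj : Disjoint F (F.image Prod.swap) := by
        rw [Finset.disjoint_left]
        intro p hp hp'
        obtain ⟨hpmem, _⟩ := mem_filter.1 hp
        have hp1 : p.1 ∈ B \ A := (mem_product.1 hpmem).1
        obtain ⟨q, hq, hqswap⟩ := Finset.mem_image.1 hp'
        obtain ⟨hqmem, _⟩ := mem_filter.1 hq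
        have hq2 : q.2 ∈ A := (mem_product.1 hqmem).2
        rw [← hqswap] at hp1
        exact (mem_sdiff.1 hp1).2 hq2
      have hsubΓ : F ∪ F.image Prod.swap ⊆ Γs := by
        intro p hp
        rcases mem_union.1 hp with hp | hp
        · obtain ⟨hpmem, hpd⟩ := mem_filter.1 hp
          obtain ⟨hp1, hp2⟩ := mem_product.1 hpmem
          refine mem_filter.2 ⟨mem_offDiag.2 ⟨?_, ?_, ?_⟩, hpd⟩
          · exact (mem_filter.1 (mem_sdiff.1 hp1).1).1
          · exact (mem_filter.1 hp2).1
          · intro h; exact (mem_sdiff.1 hp1).2 (h ▸ hp2)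
        · obtain ⟨q, hq, rfl⟩ := Finset.mem_image.1 hp
          obtain ⟨hqmem, hqd⟩ := mem_filter.1 hq
          obtain ⟨hq1, hq2⟩ := mem_product.1 hqmem
          refine mem_filter.2 ⟨mem_offDiag.2 ⟨?_, ?_, ?_⟩, ?_⟩
          · exact (mem_filter.1 hq2).1
          · exact (mem_filter.1 (mem_sdiff.1 hq1).1).1
          · intro h
            exact (mem_sdiff.1 hq1).2 (show q.1 ∈ A from (show q.2 = q.1 from h) ▸ hq2)
          · show ρ q.2 ∩ ρ q.1 = ∅
            rw [Finset.inter_comm]; exact hqd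
      calc 2 * F.card = F.card + (F.image Prod.swap).card := by
            rw [Finset.card_image_of_injective _ Prod.swap_injective]; ring
        _ = (F ∪ F.image Prod.swap).card := (card_union_of_disjoint hdisj).symm
        _ ≤ Γs.card := card_le_card hsubΓ
    -- card identities
    have hABE : (A ∪ B) ⊆ E := union_subset (filter_subset _ _) (filter_subset _ _)
    have hEcard : E.card = A.card + (B \ A).card + (E \ (A ∪ B)).card := by
      have h1 : (B \ A).card + A.card = (B ∪ A).card := card_sdiff_add_card B A
      rw [union_comm B A] at h1
      have h3 : (E \ (A ∪ B)).card = E.card - (A ∪ B).card := card_sdiff_of_subset hABE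
      have h4 : (A ∪ B).card ≤ E.card := card_le_card hABE
      omega
    have hBcard : B.card = (B \ A).card + (A ∩ B).card := by
      have h1 := card_sdiff_add_card_inter B A
      rw [inter_comm B A] at h1
      omega
    -- final arithmetic
    have hβ0 : (0:ℝ) ≤ ((B \ A).card : ℝ) := Nat.cast_nonneg _
    have hd0 : (0:ℝ) ≤ ((E \ (A ∪ B)).card : ℝ) := Nat.cast_nonneg _
    have hm0 : (0:ℝ) ≤ ((A ∩ B).card : ℝ) := Nat.cast_nonneg _
    have hn_eq : (E.card : ℝ)
        = (A.card : ℝ) + ((B \ A).card : ℝ) + ((E \ (A ∪ B)).card : ℝ) := by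
      exact_mod_cast hEcard
    have hαβ : ((B \ A).card : ℝ) + ((A ∩ B).card : ℝ) ≤ (A.card : ℝ) := by
      have h1 : (B.card : ℝ) ≤ (A.card : ℝ) := Nat.cast_le.2 hBA
      have h2' : (B.card : ℝ) = ((B \ A).card : ℝ) + ((A ∩ B).card : ℝ) := by
        exact_mod_cast hBcard
      linarith
    have hdΓ : (E.card : ℝ) * ((E \ (A ∪ B)).card : ℝ)
        ≤ η / 3 * ((E.card : ℝ) * ((E.card : ℝ) - 1)) := by
      have h1 : ((E \ (A ∪ B)).card : ℝ) ≤ ((D e₀).card : ℝ) :=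
        Nat.cast_le.2 (card_le_card hdsub)
      have h2' : (E.card : ℝ) * ((D e₀).card : ℝ) ≤ (Γs.card : ℝ) := by exact_mod_cast hD₀
      have h3 := mul_le_mul_of_nonneg_left h1 hn0.le
      linarith
    have hd' : ((E \ (A ∪ B)).card : ℝ) ≤ η * (E.card : ℝ) / 3 := by
      nlinarith [mul_nonneg hη0.le hn0.le]
    have hΓtot : 2 * (((B \ A).card : ℝ) * ((A.card : ℝ) - η * (E.card : ℝ) / 10))
        ≤ η / 3 * ((E.card : ℝ) * ((E.card : ℝ) - 1)) := by
      have h1 : ((2 * F.card : ℕ) : ℝ) ≤ (Γs.card : ℝ) := Nat.cast_le.2 hFΓ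
      push_cast at h1
      linarith
    have hα2 : (E.card : ℝ) - ((E \ (A ∪ B)).card : ℝ) ≤ 2 * (A.card : ℝ) := by linarith
    have hstepA : ((B \ A).card : ℝ) * (E.card : ℝ)
        ≤ η * ((E.card : ℝ) * (E.card : ℝ)) / 3
          + (8/15) * (((B \ A).card : ℝ) * (η * (E.card : ℝ))) := by
      nlinarith [mul_le_mul_of_nonneg_left hα2 hβ0, mul_le_mul_of_nonneg_left hd' hβ0,
        hΓtot, mul_nonneg hη0.le hn0.le]
    have hstepB : ((B \ A).card : ℝ) * (η * (E.card : ℝ))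
        ≤ (1/1000) * (((B \ A).card : ℝ) * (E.card : ℝ)) := by
      nlinarith [mul_nonneg hβ0 hn0.le]
    have hβle : ((B \ A).card : ℝ) ≤ 2 * η * (E.card : ℝ) / 3 := by
      nlinarith [hstepA, hstepB, mul_pos hη0 (mul_pos hn0 hn0), hn0]
    linarith
  rcases le_total (E.filter (fun e => b₀ ∈ ρ e)).card (E.filter (fun e => a₀ ∈ ρ e)).card with h | h
  · exact ⟨a₀, key a₀ b₀ hab₀ hρ₀ h⟩
  · exact ⟨b₀, key b₀ a₀ hab₀.symm (by rw [hρ₀]; exact pair_comm a₀ b₀) h⟩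
end

section
/- Let G be a d-regular graph on n vertices (n even) with edge set E, let k ≥ 1, and let ρ : [n] → [k] be a coloring with no monochromatic edge. Let S = {v_1, …, v_{n/2}} be a set of n/2 vertices, let Ẽ ⊆ E, and let π : Ẽ → [n/2] be a map with v_{π(e)} ∈ e for all e ∈ Ẽ. For j ∈ [n/2], let d_j := d − |π^{-1}(j)|. Fix i ∈ [k] and let C̃_i := {p_e : e ∈ Ẽ, ρ(v_{π(e)}) = i}, and suppose |C̃_i| ≥ nd/(6k). Then the number of ordered pairs of distinct edges e ≠ e' with p_e, p_{e'} ∈ C̃_i and ‖p_e − p_{e'}‖² ≤ 4 is at least |C̃_i|·( d − 1 − (6k/n)·Σ_{j : ρ(v_j) = i} d_j ). -/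
open Finset

lemma aux_castAdd_ne_natAdd {n k : ℕ} (a : Fin n) (b : Fin k) :
    Fin.castAdd k a ≠ Fin.natAdd n b := by
  intro h
  have := congrArg Fin.val h
  simp [Fin.castAdd, Fin.natAdd] at this
  omega

lemma aux_inner_single_single {N : ℕ} (a b : Fin N) :
    (inner ℝ (EuclideanSpace.single a (1 : ℝ)) (EuclideanSpace.single b (1 : ℝ)) : ℝ) =
      if a = b then 1 else 0 := by
  simp [EuclideanSpace.inner_single_left, EuclideanSpace.single_apply, eq_comm]

/-- The difference of embedded points of two edges sharing the vertex `u`. -/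
lemma aux_embed_sub {n k : ℕ} (ρ : Fin n → Fin k) (u w w' : Fin n) :
    embedEdge n k ρ s(u, w) - embedEdge n k ρ s(u, w') =
      (EuclideanSpace.single (Fin.castAdd k w) (1 : ℝ) -
        EuclideanSpace.single (Fin.castAdd k w') (1 : ℝ)) +
      (EuclideanSpace.single (Fin.natAdd n (ρ w)) (1 : ℝ) -
        EuclideanSpace.single (Fin.natAdd n (ρ w')) (1 : ℝ)) := by
  simp only [embedEdge, Sym2.lift_mk]
  abel

/-- Squared distance of embedded points of edges sharing a vertex is at most 4. -/
lemma aux_dist_sq_le {n k : ℕ} (ρ : Fin n → Fin k) (u w w' : Fin n) :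
    ‖embedEdge n k ρ s(u, w) - embedEdge n k ρ s(u, w')‖ ^ 2 ≤ 4 := by
  rw [aux_embed_sub, ← real_inner_self_eq_norm_sq]
  simp only [inner_add_left, inner_add_right, inner_sub_left, inner_sub_right,
    aux_inner_single_single, Fin.castAdd_inj]
  have h1 : Fin.castAdd k w ≠ Fin.natAdd n (ρ w) := aux_castAdd_ne_natAdd _ _
  have h2 : Fin.castAdd k w ≠ Fin.natAdd n (ρ w') := aux_castAdd_ne_natAdd _ _
  have h3 : Fin.castAdd k w' ≠ Fin.natAdd n (ρ w) := aux_castAdd_ne_natAdd _ _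
  have h4 : Fin.castAdd k w' ≠ Fin.natAdd n (ρ w') := aux_castAdd_ne_natAdd _ _
  have h5 : Fin.natAdd n (ρ w) ≠ Fin.castAdd k w := (aux_castAdd_ne_natAdd _ _).symm
  have h6 : Fin.natAdd n (ρ w') ≠ Fin.castAdd k w := (aux_castAdd_ne_natAdd _ _).symm
  have h7 : Fin.natAdd n (ρ w) ≠ Fin.castAdd k w' := (aux_castAdd_ne_natAdd _ _).symm
  have h8 : Fin.natAdd n (ρ w') ≠ Fin.castAdd k w' := (aux_castAdd_ne_natAdd _ _).symm
  have h9 : Fin.natAdd n (ρ w) = Fin.natAdd n (ρ w') ↔ ρ w = ρ w' := by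
    constructor
    · intro h
      have := congrArg Fin.val h
      simp [Fin.natAdd] at this
      exact Fin.ext (by omega)
    · intro h; rw [h]
  simp only [h1, h2, h3, h4, h5, h6, h7, h8, h9, if_false]
  split_ifs <;> norm_num

/-- Injectivity of the embedding on non-diagonal elements. -/
lemma aux_embed_inj {n k : ℕ} (ρ : Fin n → Fin k) (e e' : Sym2 (Fin n))
    (he : ¬e.IsDiag) (he' : ¬e'.IsDiag)
    (h : embedEdge n k ρ e = embedEdge n k ρ e') : e = e' := by
  induction e using Sym2.inductionOn with
  | hf a b =>
    induction e' using Sym2.inductionOn with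
    | hf c d =>
      rw [Sym2.mk_isDiag_iff] at he he'
      have key : ∀ x : Fin n,
          ((if x = a then (1 : ℝ) else 0) + (if x = b then 1 else 0)) =
          ((if x = c then (1 : ℝ) else 0) + (if x = d then 1 else 0)) := by
        intro x
        have hx := congrArg (fun f => f (Fin.castAdd k x)) h
        simp only [embedEdge, Sym2.lift_mk] at hx
        have happly : ∀ (f g : EuclideanSpace ℝ (Fin (n + k))) (j : Fin (n + k)),
            (f + g) j = f j + g j := fun _ _ _ => rfl
        simp only [happly] at hx
        simp only [EuclideanSpace.single_apply] at hx
        have e1 : (Fin.castAdd k x = Fin.castAdd k a) ↔ (x = a) := Fin.castAdd_inj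
        have e2 : (Fin.castAdd k x = Fin.castAdd k b) ↔ (x = b) := Fin.castAdd_inj
        have e3 : (Fin.castAdd k x = Fin.castAdd k c) ↔ (x = c) := Fin.castAdd_inj
        have e4 : (Fin.castAdd k x = Fin.castAdd k d) ↔ (x = d) := Fin.castAdd_inj
        have e5 : ¬(Fin.castAdd k x = Fin.natAdd n (ρ a)) := aux_castAdd_ne_natAdd _ _
        have e6 : ¬(Fin.castAdd k x = Fin.natAdd n (ρ b)) := aux_castAdd_ne_natAdd _ _
        have e7 : ¬(Fin.castAdd k x = Fin.natAdd n (ρ c)) := aux_castAdd_ne_natAdd _ _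
        have e8 : ¬(Fin.castAdd k x = Fin.natAdd n (ρ d)) := aux_castAdd_ne_natAdd _ _
        simp only [e1, e2, e3, e4, e5, e6, e7, e8, if_false, add_zero] at hx
        exact hx
      have hac : a = c ∨ a = d := by
        by_contra hcon
        push_neg at hcon
        have := key a
        simp [he, hcon.1, hcon.2] at this
      rcases hac with hac | had
      · subst hac
        have hbd : b = d := by
          by_contra hbd
          have := key b
          simp [Ne.symm he, hbd] at this
        rw [hbd]
      · subst had
        have hbc : b = c := by
          by_contra hbc
          have := key b
          simp [Ne.symm he, hbc] at this
        rw [hbc, Sym2.eq_swap]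

open Classical in
/-- lower bound on the number of ordered pairs of distinct edges of the cluster
`C̃_i` whose embedded points are at squared distance at most 4. -/
theorem stmt5 (m n d k : ℕ) (hnm : n = 2 * m) (hk : 1 ≤ k)
    (G : SimpleGraph (Fin n)) [DecidableRel G.Adj]
    (hreg : G.IsRegularOfDegree d)
    (ρ : Fin n → Fin k)
    (hnomono : ∀ u w : Fin n, G.Adj u w → ρ u ≠ ρ w)
    (v : Fin m → Fin n) (hv : Function.Injective v)
    (Et : Finset (Sym2 (Fin n))) (hEtE : Et ⊆ G.edgeFinset)
    (π : Sym2 (Fin n) → Fin m) (hπ : ∀ e ∈ Et, v (π e) ∈ e)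
    (i : Fin k)
    (hbal : (n : ℝ) * d / (6 * k) ≤
      (((Et.filter (fun e => ρ (v (π e)) = i)).image (embedEdge n k ρ)).card : ℝ)) :
    (((Et.filter (fun e => ρ (v (π e)) = i)).image (embedEdge n k ρ)).card : ℝ) *
        ((d : ℝ) - 1 -
          (6 * k / n) *
            ∑ j ∈ Finset.univ.filter (fun j : Fin m => ρ (v j) = i),
              ((d : ℝ) - ((Et.filter (fun e => π e = j)).card : ℝ))) ≤
      ((((Et.filter (fun e => ρ (v (π e)) = i)).offDiag).filter
          (fun p => ‖embedEdge n k ρ p.1 - embedEdge n k ρ p.2‖ ^ 2 ≤ 4)).card : ℝ) := by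
  set A : Finset (Sym2 (Fin n)) := Et.filter (fun e => ρ (v (π e)) = i) with hAdef
  set P : Finset (Sym2 (Fin n) × Sym2 (Fin n)) :=
    A.offDiag.filter (fun p => ‖embedEdge n k ρ p.1 - embedEdge n k ρ p.2‖ ^ 2 ≤ 4) with hPdef
  set J : Finset (Fin m) := Finset.univ.filter (fun j : Fin m => ρ (v j) = i) with hJdef
  have hAEt : A ⊆ Et := Finset.filter_subset _ _
  have hAE : A ⊆ G.edgeFinset := hAEt.trans hEtE
  -- injectivity on A
  have hinj : Set.InjOn (embedEdge n k ρ) ↑A := by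
    intro e he e' he' h
    exact aux_embed_inj ρ e e'
      (G.not_isDiag_of_mem_edgeFinset (hAE he))
      (G.not_isDiag_of_mem_edgeFinset (hAE he')) h
  have hcardim : (A.image (embedEdge n k ρ)).card = A.card :=
    Finset.card_image_of_injOn hinj
  rw [hcardim] at hbal ⊢
  -- dispatch trivial case n = 0
  rcases Nat.eq_zero_or_pos n with hn0 | hn
  · have hm0 : m = 0 := by omega
    have hAempty : A = ∅ := by
      apply Finset.eq_empty_of_forall_notMem
      intro e _
      exact (hm0 ▸ π e).elim0
    simp [hAempty, hPdef]
  have hnR : (0 : ℝ) < n := by exact_mod_cast hn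
  have hkR : (0 : ℝ) < k := by exact_mod_cast hk
  -- c j := number of edges in Et with π e = j, satisfies c j ≤ d
  set c : Fin m → ℕ := fun j => (Et.filter (fun e => π e = j)).card with hcdef
  have hcd : ∀ j : Fin m, c j ≤ d := by
    intro j
    have hsub : Et.filter (fun e => π e = j) ⊆ G.incidenceFinset (v j) := by
      intro e he
      rw [Finset.mem_filter] at he
      rw [SimpleGraph.mem_incidenceFinset]
      refine ⟨?_, ?_⟩
      · exact (SimpleGraph.mem_edgeFinset).1 (hEtE he.1)
      · rw [← he.2]; exact hπ e he.1
    calc c j ≤ (G.incidenceFinset (v j)).card := Finset.card_le_card hsub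
      _ = G.degree (v j) := G.card_incidenceFinset_eq_degree _
      _ = d := hreg (v j)
  -- P.card is at least ∑_{e ∈ A} (c (π e) - 1)
  have hPsum : ∑ e ∈ A, ((c (π e) : ℝ) - 1) ≤ (P.card : ℝ) := by
    have hfib : P.card = ∑ e ∈ A, (P.filter (fun p => p.1 = e)).card := by
      apply Finset.card_eq_sum_card_fiberwise
      intro p hp
      rw [Finset.mem_coe, hPdef, Finset.mem_filter, Finset.mem_offDiag] at hp
      exact hp.1.1
    rw [hfib]
    push_cast
    apply Finset.sum_le_sum
    intro e he
    have heEt : e ∈ Et := hAEt he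
    have hemem : e ∈ Et.filter (fun e' => π e' = π e) := by
      rw [Finset.mem_filter]; exact ⟨heEt, rfl⟩
    have hlow : ((Et.filter (fun e' => π e' = π e)).erase e).card ≤
        (P.filter (fun p => p.1 = e)).card := by
      apply Finset.card_le_card_of_injOn (fun e' => (e, e'))
      · intro e' he'
        rw [Finset.mem_coe, Finset.mem_erase, Finset.mem_filter] at he'
        obtain ⟨hne, he'Et, hπe'⟩ := he'
        have he'A : e' ∈ A := by
          rw [hAdef, Finset.mem_filter]
          refine ⟨he'Et, ?_⟩
          rw [hπe']
          rw [hAdef, Finset.mem_filter] at he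
          exact he.2
        rw [Finset.mem_coe, Finset.mem_filter, hPdef, Finset.mem_filter, Finset.mem_offDiag]
        refine ⟨⟨⟨he, he'A, Ne.symm hne⟩, ?_⟩, rfl⟩
        -- shared vertex: v (π e) ∈ e and ∈ e'
        have hu1 : v (π e) ∈ e := hπ e heEt
        have hu2 : v (π e) ∈ e' := by rw [← hπe']; exact hπ e' he'Et
        obtain ⟨w, hw⟩ := Sym2.mem_iff_exists.1 hu1
        obtain ⟨w', hw'⟩ := Sym2.mem_iff_exists.1 hu2
        rw [hw, hw']
        exact aux_dist_sq_le ρ _ _ _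
      · intro x _ y _ hxy
        exact (Prod.mk.injEq _ _ _ _ ▸ hxy).2
    have hcge1 : 1 ≤ c (π e) := by
      rw [hcdef]
      exact Finset.card_pos.2 ⟨e, hemem⟩
    have herase : ((Et.filter (fun e' => π e' = π e)).erase e).card = c (π e) - 1 :=
      Finset.card_erase_of_mem hemem
    have : ((c (π e) - 1 : ℕ) : ℝ) ≤ ((P.filter (fun p => p.1 = e)).card : ℝ) := by
      exact_mod_cast herase ▸ hlow
    rw [Nat.cast_sub hcge1] at this
    exact_mod_cast this
  -- group the sum ∑_{e ∈ A} (d - c (π e)) by fibers of π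
  have hmapsJ : ∀ e ∈ A, π e ∈ J := by
    intro e he
    rw [hAdef, Finset.mem_filter] at he
    rw [hJdef, Finset.mem_filter]
    exact ⟨Finset.mem_univ _, he.2⟩
  have hgroup : ∑ e ∈ A, ((d : ℝ) - (c (π e) : ℝ)) =
      ∑ j ∈ J, ((A.filter (fun e => π e = j)).card : ℝ) * ((d : ℝ) - (c j : ℝ)) := by
    rw [← Finset.sum_fiberwise_of_maps_to hmapsJ]
    apply Finset.sum_congr rfl
    intro j _
    have hcongr : ∀ e ∈ A.filter (fun e => π e = j),
        ((d : ℝ) - (c (π e) : ℝ)) = ((d : ℝ) - (c j : ℝ)) := by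
      intro e he
      rw [Finset.mem_filter] at he
      rw [he.2]
    rw [Finset.sum_congr rfl hcongr, Finset.sum_const, nsmul_eq_mul]
  -- a_j ≤ c j ≤ d ≤ (6k/n) * A.card
  have hdle : (d : ℝ) ≤ 6 * k / n * A.card := by
    rw [div_mul_eq_mul_div, le_div_iff₀ hnR]
    have h6k : (0 : ℝ) < 6 * k := by positivity
    rw [div_le_iff₀ h6k] at hbal
    nlinarith [hbal]
  have haj : ∀ j ∈ J, ((A.filter (fun e => π e = j)).card : ℝ) * ((d : ℝ) - (c j : ℝ)) ≤
      (6 * k / n * A.card) * ((d : ℝ) - (c j : ℝ)) := by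
    intro j _
    have h1 : A.filter (fun e => π e = j) ⊆ Et.filter (fun e => π e = j) :=
      Finset.filter_subset_filter _ hAEt
    have h2 : ((A.filter (fun e => π e = j)).card : ℝ) ≤ (c j : ℝ) := by
      exact_mod_cast Finset.card_le_card h1
    have h3 : ((c j : ℝ)) ≤ (d : ℝ) := by exact_mod_cast hcd j
    have h4 : (0 : ℝ) ≤ (d : ℝ) - (c j : ℝ) := by linarith
    apply mul_le_mul_of_nonneg_right _ h4
    linarith [hdle]
  have hsumbound : ∑ e ∈ A, ((d : ℝ) - (c (π e) : ℝ)) ≤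
      (6 * k / n * A.card) * ∑ j ∈ J, ((d : ℝ) - (c j : ℝ)) := by
    rw [hgroup, Finset.mul_sum]
    exact Finset.sum_le_sum haj
  -- final assembly
  have hsplit : ∑ e ∈ A, ((c (π e) : ℝ) - 1) =
      (A.card : ℝ) * ((d : ℝ) - 1) - ∑ e ∈ A, ((d : ℝ) - (c (π e) : ℝ)) := by
    have h1 : ∑ e ∈ A, ((c (π e) : ℝ) - 1) =
        ∑ e ∈ A, (((d : ℝ) - 1) - ((d : ℝ) - (c (π e) : ℝ))) :=
      Finset.sum_congr rfl (fun e _ => by ring)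
    rw [h1, Finset.sum_sub_distrib, Finset.sum_const, nsmul_eq_mul]
  calc (A.card : ℝ) * ((d : ℝ) - 1 - 6 * k / n * ∑ j ∈ J, ((d : ℝ) - (c j : ℝ)))
      = (A.card : ℝ) * ((d : ℝ) - 1) -
          (A.card : ℝ) * (6 * k / n * ∑ j ∈ J, ((d : ℝ) - (c j : ℝ))) := by ring
    _ ≤ (A.card : ℝ) * ((d : ℝ) - 1) - ∑ e ∈ A, ((d : ℝ) - (c (π e) : ℝ)) := by
        have : (6 * k / n * A.card) * ∑ j ∈ J, ((d : ℝ) - (c j : ℝ)) =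
            (A.card : ℝ) * (6 * k / n * ∑ j ∈ J, ((d : ℝ) - (c j : ℝ))) := by ring
        linarith [hsumbound]
    _ = ∑ e ∈ A, ((c (π e) : ℝ) - 1) := hsplit.symm
    _ ≤ (P.card : ℝ) := hPsum
end

section
/- Let G = (V, E) be a d-regular graph that is an (m, α)-small-set vertex expander, with α ∈ (0,1). Let H be a subgraph of G (on the same vertex set, with edge set contained in E). Let A ⊆ V be an independent set of G with |A| ≤ m, and let Ẽ be the set of edges of H incident to A (each such edge has exactly one endpoint in A, since A is independent). Then the number of vertices u ∈ V \ A that have exactly one H-neighbor in A is at least |Ẽ| − 2·α·d·|A|. -/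
open Finset

/-- in an `(m, α)`-small-set vertex expander, for an independent set `A` of size
at most `m` and a subgraph `H`, the number of vertices outside `A` with exactly one `H`-neighbor
in `A` is at least `|Ẽ| - 2αd|A|`, where `Ẽ` is the set of `H`-edges incident to `A`. -/
theorem stmt6 {V : Type*} [Fintype V] [DecidableEq V]
    (G H : SimpleGraph V) [DecidableRel G.Adj] [DecidableRel H.Adj]
    (d m : ℕ) (α : ℝ) (hα0 : 0 < α) (hα1 : α < 1)
    (hreg : G.IsRegularOfDegree d)
    (hexp : ∀ S : Finset V, S.card ≤ m →
      (1 - α) * (d : ℝ) * (S.card : ℝ) ≤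
        ((Finset.univ.filter (fun u => ∃ w ∈ S, G.Adj u w)).card : ℝ))
    (hHG : H ≤ G)
    (A : Finset V) (hAind : ∀ u ∈ A, ∀ w ∈ A, ¬ G.Adj u w) (hAm : A.card ≤ m) :
    ((H.edgeFinset.filter (fun e => ∃ a ∈ A, a ∈ e)).card : ℝ) -
        2 * α * (d : ℝ) * (A.card : ℝ) ≤
      ((Finset.univ.filter
          (fun u => u ∉ A ∧ (A.filter (fun a => H.Adj u a)).card = 1)).card : ℝ) := by
  classical
  set cG : V → ℕ := fun u => (A.filter (fun a => G.Adj u a)).card with hcGdef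
  set cH : V → ℕ := fun u => (A.filter (fun a => H.Adj u a)).card with hcHdef
  set N : Finset V := univ.filter (fun u => ∃ w ∈ A, G.Adj u w) with hNdef
  set N1 : Finset V := N.filter (fun u => cG u = 1) with hN1def
  set N2 : Finset V := N.filter (fun u => ¬ cG u = 1) with hN2def
  -- members of N are outside A
  have hNA : ∀ u ∈ N, u ∉ A := by
    intro u hu hA
    rw [hNdef, mem_filter] at hu
    obtain ⟨-, w, hw, hadj⟩ := hu
    exact hAind u hA w hw hadj
  have hcG0 : ∀ u, u ∉ N → cG u = 0 := by
    intro u hu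
    rw [hNdef, mem_filter] at hu
    push_neg at hu
    have hu' := hu (mem_univ u)
    rw [hcGdef]
    simp only [card_eq_zero, filter_eq_empty_iff]
    exact hu'
  have hcG1 : ∀ u ∈ N, 1 ≤ cG u := by
    intro u hu
    rw [hNdef, mem_filter] at hu
    obtain ⟨-, w, hw, hadj⟩ := hu
    have : w ∈ A.filter (fun a => G.Adj u a) := mem_filter.mpr ⟨hw, hadj⟩
    exact card_pos.mpr ⟨w, this⟩
  have hcHle : ∀ u, cH u ≤ cG u := by
    intro u
    apply card_le_card
    intro a ha
    rw [mem_filter] at ha ⊢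
    exact ⟨ha.1, hHG ha.2⟩
  -- any vertex of A has no G-neighbors (hence no H-neighbors) in A
  have hcGA : ∀ u ∈ A, cG u = 0 := by
    intro u hu
    rw [hcGdef]
    simp only [card_eq_zero, filter_eq_empty_iff]
    intro a ha
    exact hAind u hu a ha
  -- degree computation
  have hdeg : ∀ a, (univ.filter (fun u => G.Adj u a)).card = d := by
    intro a
    have : univ.filter (fun u => G.Adj u a) = G.neighborFinset a := by
      ext u
      simp [SimpleGraph.mem_neighborFinset, G.adj_comm]
    rw [this]
    exact hreg a
  -- total G-edge count from A
  have hsumG : ∑ u ∈ univ, cG u = d * A.card := by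
    have h1 : ∀ u, cG u = ∑ a ∈ A, if G.Adj u a then 1 else 0 := by
      intro u
      rw [hcGdef]
      exact card_filter _ _
    calc ∑ u ∈ univ, cG u = ∑ u ∈ univ, ∑ a ∈ A, if G.Adj u a then 1 else 0 := by
          exact Finset.sum_congr rfl (fun u _ => h1 u)
      _ = ∑ a ∈ A, ∑ u ∈ univ, if G.Adj u a then 1 else 0 := Finset.sum_comm
      _ = ∑ a ∈ A, (univ.filter (fun u => G.Adj u a)).card := by
          refine Finset.sum_congr rfl (fun a _ => ?_)
          rw [card_filter]
      _ = ∑ a ∈ A, d := Finset.sum_congr rfl (fun a _ => hdeg a)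
      _ = d * A.card := by rw [Finset.sum_const, smul_eq_mul, mul_comm]
  have hsumGN : ∑ u ∈ N, cG u = d * A.card := by
    rw [← hsumG]
    exact Finset.sum_subset (subset_univ N) (fun x _ hx => hcG0 x hx)
  -- split of N
  have hsplitG : ∑ u ∈ N1, cG u + ∑ u ∈ N2, cG u = d * A.card := by
    rw [← hsumGN, hN1def, hN2def]
    exact Finset.sum_filter_add_sum_filter_not N _ _
  have hN1sum : ∑ u ∈ N1, cG u = N1.card := by
    rw [Finset.sum_congr rfl (fun u hu => (mem_filter.mp hu).2), Finset.sum_const,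
      smul_eq_mul, mul_one]
  have hN2sum : 2 * N2.card ≤ ∑ u ∈ N2, cG u := by
    calc 2 * N2.card = N2.card * 2 := by ring
      _ = ∑ _u ∈ N2, 2 := by rw [Finset.sum_const, smul_eq_mul]
      _ ≤ ∑ u ∈ N2, cG u := by
          refine Finset.sum_le_sum (fun u hu => ?_)
          rw [hN2def, mem_filter] at hu
          have := hcG1 u hu.1
          omega
  have hNcard : N1.card + N2.card = N.card := by
    rw [hN1def, hN2def]
    exact Finset.card_filter_add_card_filter_not _
  -- edge count equals sum of cH over vertices
  have hinc : (H.edgeFinset.filter (fun e => ∃ a ∈ A, a ∈ e)) =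
      A.biUnion (fun a => H.incidenceFinset a) := by
    ext e
    simp only [mem_filter, mem_biUnion, SimpleGraph.mem_incidenceFinset,
      SimpleGraph.incidenceSet, Set.mem_setOf_eq, SimpleGraph.mem_edgeFinset]
    constructor
    · rintro ⟨he, a, ha, hae⟩
      exact ⟨a, ha, ⟨he, hae⟩⟩
    · rintro ⟨a, ha, he, hae⟩
      exact ⟨he, a, ha, hae⟩
  have hdisj : ∀ a ∈ A, ∀ b ∈ A, a ≠ b →
      Disjoint (H.incidenceFinset a) (H.incidenceFinset b) := by
    intro a ha b hb hab
    rw [Finset.disjoint_left]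
    intro e hea heb
    rw [SimpleGraph.mem_incidenceFinset] at hea heb
    obtain ⟨heE, hae⟩ := hea
    obtain ⟨-, hbe⟩ := heb
    have : e = s(a, b) := ((Sym2.mem_and_mem_iff hab).mp ⟨hae, hbe⟩)
    rw [this] at heE
    exact hAind a ha b hb (hHG (H.mem_edgeSet.mp heE))
  have hEcard : (H.edgeFinset.filter (fun e => ∃ a ∈ A, a ∈ e)).card =
      ∑ a ∈ A, H.degree a := by
    rw [hinc, Finset.card_biUnion hdisj]
    exact Finset.sum_congr rfl (fun a _ => H.card_incidenceFinset_eq_degree a)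
  have hsumH : ∑ a ∈ A, H.degree a = ∑ u ∈ univ, cH u := by
    have h1 : ∀ a, H.degree a = ∑ u ∈ univ, if H.Adj u a then 1 else 0 := by
      intro a
      rw [← SimpleGraph.card_neighborFinset_eq_degree]
      have : H.neighborFinset a = univ.filter (fun u => H.Adj u a) := by
        ext u
        simp [SimpleGraph.mem_neighborFinset, H.adj_comm]
      rw [this, card_filter]
    calc ∑ a ∈ A, H.degree a = ∑ a ∈ A, ∑ u ∈ univ, if H.Adj u a then 1 else 0 :=
          Finset.sum_congr rfl (fun a _ => h1 a)
      _ = ∑ u ∈ univ, ∑ a ∈ A, if H.Adj u a then 1 else 0 := Finset.sum_comm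
      _ = ∑ u ∈ univ, cH u := by
          refine Finset.sum_congr rfl (fun u _ => ?_)
          rw [hcHdef]
          exact (card_filter _ _).symm
  have hsumHN : ∑ u ∈ univ, cH u = ∑ u ∈ N, cH u := by
    refine (Finset.sum_subset (subset_univ N) (fun x _ hx => ?_)).symm
    have := hcHle x
    have := hcG0 x hx
    omega
  have hsplitH : ∑ u ∈ N, cH u = ∑ u ∈ N1, cH u + ∑ u ∈ N2, cH u := by
    rw [hN1def, hN2def]
    exact (Finset.sum_filter_add_sum_filter_not N _ _).symm
  -- the set of good vertices
  set U1 : Finset V := univ.filter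
      (fun u => u ∉ A ∧ (A.filter (fun a => H.Adj u a)).card = 1) with hU1def
  have hU1bound : ∑ u ∈ N1, cH u ≤ U1.card := by
    calc ∑ u ∈ N1, cH u ≤ ∑ u ∈ N1, (if cH u = 1 then 1 else 0) := by
          refine Finset.sum_le_sum (fun u hu => ?_)
          rw [hN1def, mem_filter] at hu
          have h1 := hu.2
          have h2 := hcHle u
          split <;> omega
      _ = (N1.filter (fun u => cH u = 1)).card := (card_filter _ _).symm
      _ ≤ U1.card := by
          apply card_le_card
          intro u hu
          rw [mem_filter] at hu
          rw [hU1def, mem_filter]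
          refine ⟨mem_univ u, hNA u ?_, hu.2⟩
          rw [hN1def, mem_filter] at hu
          exact hu.1.1
  have hN2H : ∑ u ∈ N2, cH u ≤ ∑ u ∈ N2, cG u :=
    Finset.sum_le_sum (fun u _ => hcHle u)
  -- expansion
  have hNbig : (1 - α) * (d : ℝ) * (A.card : ℝ) ≤ (N.card : ℝ) := hexp A hAm
  -- assemble
  have key1 : (H.edgeFinset.filter (fun e => ∃ a ∈ A, a ∈ e)).card ≤
      U1.card + ∑ u ∈ N2, cG u := by
    rw [hEcard, hsumH, hsumHN, hsplitH]
    omega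
  have key2 : N1.card + ∑ u ∈ N2, cG u = d * A.card := by
    rw [← hN1sum]; exact hsplitG
  -- cast to ℝ and finish
  have c1 : ((H.edgeFinset.filter (fun e => ∃ a ∈ A, a ∈ e)).card : ℝ) ≤
      (U1.card : ℝ) + ((∑ u ∈ N2, cG u : ℕ) : ℝ) := by exact_mod_cast key1
  have c2 : (N1.card : ℝ) + ((∑ u ∈ N2, cG u : ℕ) : ℝ) = (d : ℝ) * (A.card : ℝ) := by
    exact_mod_cast key2
  have c3 : 2 * (N2.card : ℝ) ≤ ((∑ u ∈ N2, cG u : ℕ) : ℝ) := by exact_mod_cast hN2sum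
  have c4 : (N1.card : ℝ) + (N2.card : ℝ) = (N.card : ℝ) := by exact_mod_cast hNcard
  rw [hU1def] at *
  linarith
end

section
/- Let d ≥ 1 and let H be a finite graph with nonempty edge set E_H in which every vertex has degree at most d. Let H̃ be a subgraph of H with nonempty edge set Ã that is a disjoint union of stars: there is a vertex set Ṽ such that every edge of H̃ has exactly one endpoint in Ṽ, and every vertex outside Ṽ has H̃-degree at most 1. Writing d_v for the H-degree and d̃_v for the H̃-degree of a vertex v, it holds that (Σ_v d_v²)/|E_H| ≤ (Σ_{v∈Ṽ} d̃_v²)/|Ã| + 1 + 4d·(|E_H| − |Ã|)/|E_H|. -/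
open Finset

lemma stmt7_aux {V : Type*} [Fintype V] [DecidableEq V]
    (Ht : SimpleGraph V) [DecidableRel Ht.Adj] (Vt : Finset V)
    (hstar : ∀ u w : V, Ht.Adj u w → (u ∈ Vt ↔ w ∉ Vt)) :
    ∑ v ∈ Vt, Ht.degree v = Ht.edgeFinset.card := by
  have h1 : ∀ v : V, Ht.degree v = ∑ e ∈ Ht.edgeFinset, if v ∈ e then 1 else 0 := by
    intro v
    rw [← SimpleGraph.card_incidenceFinset_eq_degree, SimpleGraph.incidenceFinset_eq_filter,
      Finset.card_filter]
  calc ∑ v ∈ Vt, Ht.degree v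
      = ∑ v ∈ Vt, ∑ e ∈ Ht.edgeFinset, if v ∈ e then 1 else 0 := by
        simp only [h1]
    _ = ∑ e ∈ Ht.edgeFinset, ∑ v ∈ Vt, if v ∈ e then 1 else 0 := Finset.sum_comm
    _ = ∑ e ∈ Ht.edgeFinset, 1 := by
        refine Finset.sum_congr rfl ?_
        intro e he
        induction e with
        | h u w =>
          rw [SimpleGraph.mem_edgeFinset, SimpleGraph.mem_edgeSet] at he
          have huw : u ≠ w := he.ne
          have hone : (u ∈ Vt ↔ w ∉ Vt) := hstar u w he
          rw [← Finset.card_filter]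
          by_cases hu : u ∈ Vt
          · have hw : w ∉ Vt := hone.1 hu
            have : Vt.filter (fun v => v ∈ s(u, w)) = {u} := by
              ext v
              simp only [Finset.mem_filter, Sym2.mem_iff, Finset.mem_singleton]
              constructor
              · rintro ⟨hv, rfl | rfl⟩
                · rfl
                · exact absurd hv hw
              · rintro rfl; exact ⟨hu, Or.inl rfl⟩
            rw [this, Finset.card_singleton]
          · have hw : w ∈ Vt := by
              by_contra hw
              exact hu (hone.2 hw)
            have : Vt.filter (fun v => v ∈ s(u, w)) = {w} := by
              ext v
              simp only [Finset.mem_filter, Sym2.mem_iff, Finset.mem_singleton]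
              constructor
              · rintro ⟨hv, rfl | rfl⟩
                · exact absurd hv hu
                · rfl
              · rintro rfl; exact ⟨hw, Or.inr rfl⟩
            rw [this, Finset.card_singleton]
    _ = Ht.edgeFinset.card := by simp

/-- degree-square comparison between a bounded-degree graph `H` and a star-forest
subgraph `H̃` (every edge of `H̃` has exactly one endpoint in `Ṽ`, vertices outside `Ṽ` have
`H̃`-degree at most 1). -/
theorem stmt7 {V : Type*} [Fintype V] [DecidableEq V]
    (d : ℕ) (hd : 1 ≤ d)
    (H Ht : SimpleGraph V) [DecidableRel H.Adj] [DecidableRel Ht.Adj]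
    (hsub : Ht ≤ H)
    (hHne : H.edgeFinset.Nonempty) (hAne : Ht.edgeFinset.Nonempty)
    (hdeg : ∀ v : V, H.degree v ≤ d)
    (Vt : Finset V)
    (hstar : ∀ u w : V, Ht.Adj u w → (u ∈ Vt ↔ w ∉ Vt))
    (hleaf : ∀ w : V, w ∉ Vt → Ht.degree w ≤ 1) :
    (∑ v : V, (H.degree v : ℝ) ^ 2) / (H.edgeFinset.card : ℝ) ≤
      (∑ v ∈ Vt, (Ht.degree v : ℝ) ^ 2) / (Ht.edgeFinset.card : ℝ) + 1 +
        4 * (d : ℝ) * (((H.edgeFinset.card : ℝ) - (Ht.edgeFinset.card : ℝ)) /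
          (H.edgeFinset.card : ℝ)) := by
  set E : ℝ := (H.edgeFinset.card : ℝ) with hEdef
  set A : ℝ := (Ht.edgeFinset.card : ℝ) with hAdef
  have hE : (0:ℝ) < E := by
    rw [hEdef]; exact_mod_cast Finset.card_pos.2 hHne
  have hA : (0:ℝ) < A := by
    rw [hAdef]; exact_mod_cast Finset.card_pos.2 hAne
  have hAE : A ≤ E := by
    rw [hEdef, hAdef]
    exact_mod_cast Finset.card_le_card (SimpleGraph.edgeFinset_mono hsub)
  -- degree monotonicity
  have hdle : ∀ v : V, Ht.degree v ≤ H.degree v := by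
    intro v
    apply Finset.card_le_card
    intro w hw
    rw [SimpleGraph.mem_neighborFinset] at *
    exact hsub hw
  -- degree sums
  have hsumH : ∑ v : V, (H.degree v : ℝ) = 2 * E := by
    rw [hEdef]
    exact_mod_cast congrArg (Nat.cast : ℕ → ℝ) (SimpleGraph.sum_degrees_eq_twice_card_edges H)
  have hsumHt : ∑ v : V, (Ht.degree v : ℝ) = 2 * A := by
    rw [hAdef]
    exact_mod_cast congrArg (Nat.cast : ℕ → ℝ) (SimpleGraph.sum_degrees_eq_twice_card_edges Ht)
  have hsumVt : ∑ v ∈ Vt, (Ht.degree v : ℝ) = A := by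
    rw [hAdef]
    exact_mod_cast congrArg (Nat.cast : ℕ → ℝ) (stmt7_aux Ht Vt hstar)
  -- step 1 : sum of squares difference
  have step1 : ∑ v : V, (H.degree v : ℝ) ^ 2 ≤
      ∑ v : V, (Ht.degree v : ℝ) ^ 2 + 4 * d * (E - A) := by
    have h : ∀ v : V, (H.degree v : ℝ) ^ 2 - (Ht.degree v : ℝ) ^ 2 ≤
        2 * d * ((H.degree v : ℝ) - (Ht.degree v : ℝ)) := by
      intro v
      have h1 : (Ht.degree v : ℝ) ≤ (H.degree v : ℝ) := by exact_mod_cast hdle v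
      have h2 : (H.degree v : ℝ) ≤ d := by exact_mod_cast hdeg v
      have h3 : (Ht.degree v : ℝ) ≤ d := h1.trans h2
      have h0 : (0:ℝ) ≤ (Ht.degree v : ℝ) := by positivity
      nlinarith
    have this : ∑ v : V, ((H.degree v : ℝ) ^ 2 - (Ht.degree v : ℝ) ^ 2) ≤
        ∑ v : V, 2 * (d:ℝ) * ((H.degree v : ℝ) - (Ht.degree v : ℝ)) :=
      Finset.sum_le_sum fun v _ => h v
    rw [Finset.sum_sub_distrib] at this
    have h4 : ∑ v : V, 2 * (d:ℝ) * ((H.degree v : ℝ) - (Ht.degree v : ℝ))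
        = 2 * d * (2 * E - 2 * A) := by
      rw [← Finset.mul_sum, Finset.sum_sub_distrib, hsumH, hsumHt]
    rw [h4] at this
    linarith
  -- step 2 : outside Vt
  have step2 : ∑ v : V, (Ht.degree v : ℝ) ^ 2 ≤ ∑ v ∈ Vt, (Ht.degree v : ℝ) ^ 2 + A := by
    have hsplit : ∑ v ∈ Vt, (Ht.degree v : ℝ) ^ 2 + ∑ v ∈ Vtᶜ, (Ht.degree v : ℝ) ^ 2
        = ∑ v : V, (Ht.degree v : ℝ) ^ 2 := Finset.sum_add_sum_compl Vt _
    have hsplit' : ∑ v ∈ Vt, (Ht.degree v : ℝ) + ∑ v ∈ Vtᶜ, (Ht.degree v : ℝ)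
        = ∑ v : V, (Ht.degree v : ℝ) := Finset.sum_add_sum_compl Vt _
    have hout : ∑ v ∈ Vtᶜ, (Ht.degree v : ℝ) ^ 2 ≤ ∑ v ∈ Vtᶜ, (Ht.degree v : ℝ) := by
      refine Finset.sum_le_sum ?_
      intro v hv
      rw [Finset.mem_compl] at hv
      have := hleaf v hv
      interval_cases h : Ht.degree v <;> norm_num
    have houtA : ∑ v ∈ Vtᶜ, (Ht.degree v : ℝ) = A := by
      have := hsplit'
      rw [hsumHt, hsumVt] at this
      linarith
    linarith
  -- final arithmetic
  set S : ℝ := ∑ v ∈ Vt, (Ht.degree v : ℝ) ^ 2 with hSdef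
  have hS : 0 ≤ S := Finset.sum_nonneg fun v _ => by positivity
  have key : ∑ v : V, (H.degree v : ℝ) ^ 2 ≤ S + A + 4 * d * (E - A) := by linarith
  calc (∑ v : V, (H.degree v : ℝ) ^ 2) / E
      ≤ (S + A + 4 * d * (E - A)) / E := by
        exact div_le_div_of_nonneg_right key hE.le
    _ = S / E + A / E + 4 * d * ((E - A) / E) := by ring
    _ ≤ S / A + 1 + 4 * d * ((E - A) / E) := by
        have t1 : S / E ≤ S / A := div_le_div_of_nonneg_left hS hA hAE
        have t2 : A / E ≤ 1 := (div_le_one hE).2 hAE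
        linarith
end

section
/- Let G = (V, E) be a d-regular graph on n vertices that is an (m, α)-small-set vertex expander, with α ∈ (0,1) and d ≥ 2/α. Let H be a subgraph of G with nonempty edge set E_H, and suppose 2|E_H|/(√α·d) ≤ m. Then Σ_{v∈V} deg_H(v)² ≤ d·(1 + 5√α)·|E_H|. -/
open Finset

set_option maxHeartbeats 1000000

lemma swap_count {V : Type*} [Fintype V] [DecidableEq V] {r : V → V → Prop} [DecidableRel r]
    (hr : Symmetric r) (A B : Finset V) :
    ∑ v ∈ A, (B.filter (r v)).card = ∑ u ∈ B, (A.filter (r u)).card := by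
  simp_rw [Finset.card_filter]
  rw [Finset.sum_comm]
  exact Finset.sum_congr rfl fun u _ => Finset.sum_congr rfl fun v _ =>
    if_congr ⟨fun h => hr h, fun h => hr h⟩ rfl rfl

/-- in a `d`-regular `(m, α)`-small-set vertex expander on `n` vertices with
`d ≥ 2/α`, any subgraph `H` with `2|E_H|/(√α·d) ≤ m` satisfies
`∑_v deg_H(v)² ≤ d(1+5√α)|E_H|`. -/
theorem stmt8 {V : Type*} [Fintype V] [DecidableEq V]
    (G H : SimpleGraph V) [DecidableRel G.Adj] [DecidableRel H.Adj]
    (n d m : ℕ) (hn : Fintype.card V = n)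
    (α : ℝ) (hα0 : 0 < α) (hα1 : α < 1)
    (hd : 2 / α ≤ (d : ℝ))
    (hreg : G.IsRegularOfDegree d)
    (hexp : ∀ S : Finset V, S.card ≤ m →
      (1 - α) * (d : ℝ) * (S.card : ℝ) ≤
        ((Finset.univ.filter (fun u => ∃ w ∈ S, G.Adj u w)).card : ℝ))
    (hHG : H ≤ G) (hHne : H.edgeFinset.Nonempty)
    (hm : 2 * (H.edgeFinset.card : ℝ) / (Real.sqrt α * (d : ℝ)) ≤ (m : ℝ)) :
    ∑ v : V, (H.degree v : ℝ) ^ 2 ≤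
      (d : ℝ) * (1 + 5 * Real.sqrt α) * (H.edgeFinset.card : ℝ) := by
  set s : ℝ := Real.sqrt α with hsdef
  set E : ℝ := (H.edgeFinset.card : ℝ) with hEdef
  have hs : 0 < s := Real.sqrt_pos.mpr hα0
  have hss : s * s = α := Real.mul_self_sqrt hα0.le
  have hd0 : (0:ℝ) < d := lt_of_lt_of_le (by positivity) hd
  have had : 2 ≤ α * d := by
    rw [div_le_iff₀ hα0] at hd; linarith
  have hE0 : 0 ≤ E := by positivity
  -- degrees bounded by d
  have hdegle : ∀ v : V, (H.degree v : ℝ) ≤ d := by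
    intro v
    have : H.degree v ≤ G.degree v := by
      apply Finset.card_le_card
      intro u hu
      rw [SimpleGraph.mem_neighborFinset] at hu ⊢
      exact hHG hu
    rw [hreg v] at this
    exact_mod_cast this
  -- sum of degrees
  have hsumN : ∑ v : V, H.degree v = 2 * H.edgeFinset.card :=
    H.sum_degrees_eq_twice_card_edges
  have hsum : ∑ v : V, (H.degree v : ℝ) = 2 * E := by
    rw [hEdef]; exact_mod_cast congrArg (Nat.cast : ℕ → ℝ) hsumN
  set S : Finset V := univ.filter (fun v => s * d ≤ (H.degree v : ℝ)) with hSdef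
  have hS2E : (S.card : ℝ) * (s * d) ≤ 2 * E := by
    calc (S.card : ℝ) * (s * d) = ∑ _v ∈ S, (s * d) := by
          rw [Finset.sum_const, nsmul_eq_mul]
      _ ≤ ∑ v ∈ S, (H.degree v : ℝ) := by
          apply Finset.sum_le_sum
          intro v hv
          exact (Finset.mem_filter.mp hv).2
      _ ≤ ∑ v : V, (H.degree v : ℝ) := by
          exact Finset.sum_le_sum_of_subset_of_nonneg (Finset.subset_univ S)
            (fun v _ _ => Nat.cast_nonneg _)
      _ = 2 * E := hsum
  have hSm : S.card ≤ m := by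
    have hsd : 0 < s * d := mul_pos hs hd0
    rw [div_le_iff₀ hsd] at hm
    have : (S.card : ℝ) ≤ (m : ℝ) := by
      rw [← mul_le_mul_iff_of_pos_right hsd]
      calc (S.card : ℝ) * (s * d) ≤ 2 * E := hS2E
        _ = 2 * (H.edgeFinset.card : ℝ) := rfl
        _ ≤ (m : ℝ) * (s * d) := hm
    exact_mod_cast this
  set NS : Finset V := univ.filter (fun u => ∃ w ∈ S, G.Adj u w) with hNSdef
  have hNS : (1 - α) * d * S.card ≤ (NS.card : ℝ) := hexp S hSm
  set k : V → ℕ := fun u => (S.filter (G.Adj u)).card with hkdef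
  have hksum : ∑ u : V, k u = d * S.card := by
    rw [hkdef]
    rw [swap_count (r := G.Adj) (by intro x y h; exact G.adj_symm h) Finset.univ S]
    have : ∀ v ∈ S, (univ.filter (G.Adj v)).card = d := by
      intro v _
      rw [← SimpleGraph.neighborFinset_eq_filter]
      exact hreg v
    rw [Finset.sum_congr rfl this, Finset.sum_const, smul_eq_mul, mul_comm]
  have hkoff : ∀ u ∉ NS, k u = 0 := by
    intro u hu
    rw [hNSdef, Finset.mem_filter] at hu
    push_neg at hu
    rw [hkdef, Finset.card_eq_zero, Finset.filter_eq_empty_iff]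
    intro w hw
    exact fun hadj => (hu (Finset.mem_univ u) w hw) hadj
  have hNSsum : ∑ u ∈ NS, k u = d * S.card := by
    rw [← hksum]
    exact Finset.sum_subset (Finset.subset_univ NS) (fun u _ hu => hkoff u hu)
  have hk1 : ∀ u ∈ NS, 1 ≤ k u := by
    intro u hu
    rw [hNSdef, Finset.mem_filter] at hu
    obtain ⟨w, hw, hadj⟩ := hu.2
    rw [hkdef]
    exact Finset.card_pos.mpr ⟨w, Finset.mem_filter.mpr ⟨hw, hadj⟩⟩
  -- sum of k over S bounded
  have hkS : ∑ u ∈ S, (k u : ℝ) ≤ (S.card : ℝ) + α * d * S.card := by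
    set S' : Finset V := S.filter (fun u => 1 ≤ k u) with hS'def
    have hS'NS : S' ⊆ NS := by
      intro u hu
      rw [hS'def, Finset.mem_filter] at hu
      obtain ⟨huS, hku⟩ := hu
      rw [hkdef] at hku
      obtain ⟨w, hw⟩ := Finset.card_pos.mp hku
      rw [Finset.mem_filter] at hw
      rw [hNSdef, Finset.mem_filter]
      exact ⟨Finset.mem_univ u, w, hw.1, hw.2⟩
    have h1 : ∑ u ∈ S', (k u : ℝ) = ∑ u ∈ S, (k u : ℝ) := by
      apply Finset.sum_filter_of_ne
      intro u _ h
      by_contra hc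
      push_neg at hc
      interval_cases (k u)
      · exact h (by norm_num)
    rw [← h1]
    have h2 : ∑ u ∈ S', (k u : ℝ) ≤ (S'.card : ℝ) + ∑ u ∈ S', ((k u : ℝ) - 1) := by
      rw [Finset.sum_sub_distrib, Finset.sum_const, nsmul_eq_mul, mul_one]
      linarith
    have h3 : ∑ u ∈ S', ((k u : ℝ) - 1) ≤ ∑ u ∈ NS, ((k u : ℝ) - 1) := by
      apply Finset.sum_le_sum_of_subset_of_nonneg hS'NS
      intro u hu _
      have := hk1 u hu
      have : (1:ℝ) ≤ (k u : ℝ) := by exact_mod_cast this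
      linarith
    have h4 : ∑ u ∈ NS, ((k u : ℝ) - 1) = (d : ℝ) * S.card - NS.card := by
      rw [Finset.sum_sub_distrib, Finset.sum_const, nsmul_eq_mul, mul_one]
      congr 1
      exact_mod_cast hNSsum
    have h5 : (S'.card : ℝ) ≤ (S.card : ℝ) := by
      exact_mod_cast Finset.card_le_card (Finset.filter_subset _ S)
    have h6 : (d:ℝ) * S.card - NS.card ≤ α * d * S.card := by nlinarith [hNS]
    calc ∑ u ∈ S', (k u : ℝ) ≤ (S'.card : ℝ) + ∑ u ∈ S', ((k u : ℝ) - 1) := h2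
      _ ≤ (S.card : ℝ) + ∑ u ∈ NS, ((k u : ℝ) - 1) := by linarith [h3]
      _ ≤ (S.card : ℝ) + α * d * S.card := by rw [h4]; linarith
  -- internal H-edge count
  set cS : ℝ := ∑ v ∈ S, ((S.filter (H.Adj v)).card : ℝ) with hcSdef
  have hcSk : cS ≤ ∑ u ∈ S, (k u : ℝ) := by
    apply Finset.sum_le_sum
    intro v _
    have : S.filter (H.Adj v) ⊆ S.filter (G.Adj v) := by
      intro u hu
      rw [Finset.mem_filter] at hu ⊢
      exact ⟨hu.1, hHG hu.2⟩
    exact_mod_cast Finset.card_le_card this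
  have hSc0 : (0:ℝ) ≤ (S.card : ℝ) := Nat.cast_nonneg _
  have hcS : cS ≤ 3 * s * E := by
    have h1 : cS ≤ (S.card : ℝ) + α * d * S.card := le_trans hcSk hkS
    have h2 : (S.card : ℝ) ≤ α * d * S.card / 2 := by nlinarith
    have h3 : α * d * (S.card : ℝ) ≤ s * (2 * E) := by
      calc α * d * (S.card : ℝ) = s * ((S.card : ℝ) * (s * d)) := by rw [← hss]; ring
        _ ≤ s * (2 * E) := by
            apply mul_le_mul_of_nonneg_left hS2E hs.le
    linarith
  -- sum of degrees over S
  have hmain : ∑ v ∈ S, (H.degree v : ℝ) ≤ E + cS / 2 := by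
    have hsplit : ∀ v : V, H.degree v =
        (S.filter (H.Adj v)).card + ((univ \ S).filter (H.Adj v)).card := by
      intro v
      rw [SimpleGraph.degree, SimpleGraph.neighborFinset_eq_filter]
      rw [← Finset.card_union_of_disjoint, ← Finset.filter_union,
        Finset.union_sdiff_of_subset (Finset.subset_univ S)]
      exact Finset.disjoint_filter_filter (Finset.disjoint_sdiff)
    have hX : ∑ v ∈ S, (((univ \ S).filter (H.Adj v)).card : ℝ) ≤
        ∑ u ∈ univ \ S, (H.degree u : ℝ) := by
      have := swap_count (r := H.Adj) (by intro x y h; exact H.adj_symm h) S (univ \ S)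
      rw [show (∑ v ∈ S, (((univ \ S).filter (H.Adj v)).card : ℝ)) =
          ((∑ v ∈ S, ((univ \ S).filter (H.Adj v)).card : ℕ) : ℝ) by push_cast; ring,
        this]
      push_cast
      apply Finset.sum_le_sum
      intro u _
      have : (S.filter (H.Adj u)).card ≤ H.degree u := by
        rw [SimpleGraph.degree, SimpleGraph.neighborFinset_eq_filter]
        exact Finset.card_le_card (Finset.filter_subset_filter _ (Finset.subset_univ S))
      exact_mod_cast this
    have hsd : ∑ u ∈ univ \ S, (H.degree u : ℝ) + ∑ v ∈ S, (H.degree v : ℝ) = 2 * E := by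
      rw [Finset.sum_sdiff (Finset.subset_univ S), hsum]
    have heq : ∑ v ∈ S, (H.degree v : ℝ) =
        cS + ∑ v ∈ S, (((univ \ S).filter (H.Adj v)).card : ℝ) := by
      rw [hcSdef, ← Finset.sum_add_distrib]
      apply Finset.sum_congr rfl
      intro v _
      rw [hsplit v]
      push_cast; ring
    linarith
  -- final assembly
  have hsplitsum : ∑ v : V, (H.degree v : ℝ) ^ 2 =
      ∑ v ∈ univ \ S, (H.degree v : ℝ) ^ 2 + ∑ v ∈ S, (H.degree v : ℝ) ^ 2 :=
    (Finset.sum_sdiff (Finset.subset_univ S)).symm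
  have hSsq : ∑ v ∈ S, (H.degree v : ℝ) ^ 2 ≤ d * ∑ v ∈ S, (H.degree v : ℝ) := by
    rw [Finset.mul_sum]
    apply Finset.sum_le_sum
    intro v _
    have h1 := hdegle v
    have h2 : (0:ℝ) ≤ (H.degree v : ℝ) := Nat.cast_nonneg _
    nlinarith
  have hCsq : ∑ v ∈ univ \ S, (H.degree v : ℝ) ^ 2 ≤
      s * d * ∑ v ∈ univ \ S, (H.degree v : ℝ) := by
    rw [Finset.mul_sum]
    apply Finset.sum_le_sum
    intro v hv
    have hvS : v ∉ S := (Finset.mem_sdiff.mp hv).2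
    have : ¬ (s * d ≤ (H.degree v : ℝ)) := by
      intro h
      exact hvS (Finset.mem_filter.mpr ⟨Finset.mem_univ v, h⟩)
    push_neg at this
    have h2 : (0:ℝ) ≤ (H.degree v : ℝ) := Nat.cast_nonneg _
    nlinarith
  have hCsum : ∑ v ∈ univ \ S, (H.degree v : ℝ) ≤ 2 * E := by
    have h1 : (0:ℝ) ≤ ∑ v ∈ S, (H.degree v : ℝ) := Finset.sum_nonneg fun v _ => Nat.cast_nonneg _
    have hsd : ∑ u ∈ univ \ S, (H.degree u : ℝ) + ∑ v ∈ S, (H.degree v : ℝ) = 2 * E := by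
      rw [Finset.sum_sdiff (Finset.subset_univ S), hsum]
    linarith
  have hC0 : (0:ℝ) ≤ ∑ v ∈ univ \ S, (H.degree v : ℝ) := Finset.sum_nonneg fun v _ => Nat.cast_nonneg _
  have hSdeg : ∑ v ∈ S, (H.degree v : ℝ) ≤ E + (3/2) * s * E := by
    linarith [hmain, hcS]
  calc ∑ v : V, (H.degree v : ℝ) ^ 2
      = ∑ v ∈ univ \ S, (H.degree v : ℝ) ^ 2 + ∑ v ∈ S, (H.degree v : ℝ) ^ 2 := hsplitsum
    _ ≤ s * d * (2 * E) + d * (E + (3/2) * s * E) := by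
        have t1 : s * d * ∑ v ∈ univ \ S, (H.degree v : ℝ) ≤ s * d * (2 * E) :=
          mul_le_mul_of_nonneg_left hCsum (by positivity)
        have t2 : d * ∑ v ∈ S, (H.degree v : ℝ) ≤ d * (E + (3/2) * s * E) :=
          mul_le_mul_of_nonneg_left hSdeg hd0.le
        linarith [hCsq, hSsq]
    _ ≤ (d : ℝ) * (1 + 5 * s) * E := by nlinarith [mul_pos hs hd0, mul_nonneg (mul_pos hs hd0).le hE0]
end

section
/- Let d > 0 and 0 < θ ≤ 1/100. Let Ṽ be a finite set and (d̃_v)_{v∈Ṽ} real numbers with 0 ≤ d̃_v ≤ d for all v, satisfying Σ_{v∈Ṽ} d̃_v·(d̃_v − (1−θ)d) ≥ 0. Define V⁺ := {v : d̃_v ≥ (1−θ)d} and L := {v : (1−2√θ)d ≤ d̃_v < (1−θ)d}. Then Σ_{v∈Ṽ} d̃_v ≤ (1 + 4√θ)·Σ_{v∈V⁺∪L} d̃_v. -/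
open Finset

/-- degree-partition argument. If `0 ≤ d̃_v ≤ d` and
`∑ d̃_v (d̃_v - (1-θ)d) ≥ 0`, then the vertices with `d̃_v ≥ (1-2√θ)d` carry almost all of the
mass: `∑_Ṽ d̃_v ≤ (1+4√θ)·∑_{V⁺∪L} d̃_v`. -/
theorem stmt10 {ι : Type*} [DecidableEq ι] (d θ : ℝ) (hd : 0 < d)
    (hθ0 : 0 < θ) (hθ1 : θ ≤ 1 / 100)
    (Vt : Finset ι) (dt : ι → ℝ)
    (hnonneg : ∀ v ∈ Vt, 0 ≤ dt v) (hle : ∀ v ∈ Vt, dt v ≤ d)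
    (hsum : 0 ≤ ∑ v ∈ Vt, dt v * (dt v - (1 - θ) * d)) :
    ∑ v ∈ Vt, dt v ≤
      (1 + 4 * Real.sqrt θ) *
        ∑ v ∈ (Vt.filter (fun v => (1 - θ) * d ≤ dt v)) ∪
              (Vt.filter (fun v => (1 - 2 * Real.sqrt θ) * d ≤ dt v ∧ dt v < (1 - θ) * d)),
          dt v := by
  set s := Real.sqrt θ with hs_def
  have hs0 : 0 < s := Real.sqrt_pos.mpr hθ0
  have hθs : θ = s * s := (Real.mul_self_sqrt hθ0.le).symm
  have hs1 : s ≤ 1 := by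
    rw [hs_def]; exact Real.sqrt_le_one.mpr (by linarith)
  have hθles : θ ≤ s := by nlinarith
  classical
  have hunion : (Vt.filter fun v => (1 - θ) * d ≤ dt v) ∪
      (Vt.filter fun v => (1 - 2 * s) * d ≤ dt v ∧ dt v < (1 - θ) * d)
      = Vt.filter (fun v => (1 - 2 * s) * d ≤ dt v) := by
    ext v
    simp only [mem_union, mem_filter]
    constructor
    · rintro (⟨hv, h⟩ | ⟨hv, h, _⟩)
      · exact ⟨hv, le_trans (by nlinarith) h⟩
      · exact ⟨hv, h⟩
    · rintro ⟨hv, h⟩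
      rcases le_or_gt ((1 - θ) * d) (dt v) with h' | h'
      · exact Or.inl ⟨hv, h'⟩
      · exact Or.inr ⟨hv, h, h'⟩
  rw [hunion]
  set P : ι → Prop := fun v => (1 - 2 * s) * d ≤ dt v with hP
  set A := ∑ v ∈ Vt.filter P, dt v with hA
  set B := ∑ v ∈ Vt.filter (fun v => ¬ P v), dt v with hB
  have hsplit : ∑ v ∈ Vt, dt v = A + B :=
    (sum_filter_add_sum_filter_not Vt P dt).symm
  have hA0 : 0 ≤ A :=
    sum_nonneg fun v hv => hnonneg v (mem_filter.mp hv).1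
  have hB0 : 0 ≤ B :=
    sum_nonneg fun v hv => hnonneg v (mem_filter.mp hv).1
  have hboundA : ∑ v ∈ Vt.filter P, dt v * (dt v - (1 - θ) * d) ≤ θ * d * A := by
    rw [hA, Finset.mul_sum]
    apply sum_le_sum
    intro v hv
    have hv1 := mem_filter.mp hv
    have h1 := hnonneg v hv1.1
    have h2 := hle v hv1.1
    nlinarith
  have hboundB : ∑ v ∈ Vt.filter (fun v => ¬ P v), dt v * (dt v - (1 - θ) * d)
      ≤ -(s * d) * B := by
    rw [hB, Finset.mul_sum]
    apply sum_le_sum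
    intro v hv
    have hv1 := mem_filter.mp hv
    have h1 := hnonneg v hv1.1
    have h3 : dt v < (1 - 2 * s) * d := lt_of_not_ge hv1.2
    have h4 : dt v * (dt v - (1 - θ) * d) ≤ dt v * ((1 - 2 * s) * d - (1 - θ) * d) :=
      mul_le_mul_of_nonneg_left (by linarith) h1
    nlinarith [mul_nonneg (mul_nonneg h1 hd.le) (sub_nonneg.mpr hθles)]
  have hkey : 0 ≤ θ * d * A - s * d * B := by
    have := sum_filter_add_sum_filter_not Vt P (fun v => dt v * (dt v - (1 - θ) * d))
    linarith [hsum, hboundA, hboundB, this.symm ▸ hsum]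
  have hkey' : 0 ≤ s * s * d * A - s * d * B := by rw [hθs] at hkey; linarith
  have hBle : B ≤ s * A := by
    have hsd : 0 < s * d := mul_pos hs0 hd
    nlinarith [hkey', hsd]
  rw [hsplit]
  nlinarith
end
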